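/- arXiv:2107.08984 — 10 statements merged into one kernel-verified Lean document; each statement's English description precedes it below -/
import Mathlib

section
/- Let p be an odd prime and let a, b be integers with p not dividing a(1-a). Then the number of x in {0, 1, ..., p-1} such that the least nonnegative residue of ax+b modulo p is greater than x equals (p-1)/2. -/
/-! Put `r x = ((a - 1) x + b) mod p`. Then `(a x + b) mod p = x + r x - p·[x + r x ≥ p]`.
Both `x ↦ a x + b` and `x ↦ (a - 1) x + b` permute the residues mod `p`, so summing this identity
over `x` shows that exactly `(p - 1) / 2` of the `x` wrap around. The residue of `a x + b` exceeds
`x` unless `x` wraps around or `r x = 0`, and the latter happens for exactly one `x`. -/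

open Finset

theorem Int.emod_add_eq_sub_ite {x r n : ℤ} (hx : 0 ≤ x) (hxn : x < n) (hr : 0 ≤ r) (hrn : r < n) :
    (x + r) % n = x + r - n * (if n ≤ x + r then 1 else 0) := by
  split_ifs with h
  · rw [Int.emod_eq_sub_self_emod, Int.emod_eq_of_lt (by omega) (by omega)]
    ring
  · rw [Int.emod_eq_of_lt (by omega) (by omega)]
    ring

theorem injOn_range_emod_affine (n : ℕ) {c : ℤ} (d : ℤ) (hc : IsCoprime c n) :
    Set.InjOn (fun x : ℕ => ((c * x + d) % n).toNat) (range n : Set ℕ) := by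
  intro x hx y hy hxy
  simp only [coe_range, Set.mem_Iio] at hx hy
  have hmod : (c * x + d) % n = (c * y + d) % n := by
    have := Int.emod_nonneg (c * x + d) (by omega : (n : ℤ) ≠ 0)
    have := Int.emod_nonneg (c * y + d) (by omega : (n : ℤ) ≠ 0)
    simp only at hxy
    omega
  have hdvd : (n : ℤ) ∣ c * ((y : ℤ) - x) := by
    have := (Int.ModEq.dvd (hmod : (c * x + d) ≡ (c * y + d) [ZMOD n]))
    rwa [show c * (y : ℤ) + d - (c * x + d) = c * ((y : ℤ) - x) by ring] at this
  have hxy0 : (y : ℤ) - x = 0 :=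
    Int.eq_zero_of_dvd_of_natAbs_lt_natAbs (hc.symm.dvd_of_dvd_mul_left hdvd) (by omega)
  omega

theorem sum_range_emod_affine {M : Type*} [AddCommMonoid M] (n : ℕ) {c : ℤ} (d : ℤ)
    (hc : IsCoprime c n) (g : ℤ → M) :
    ∑ x ∈ range n, g ((c * x + d) % n) = ∑ x ∈ range n, g x := by
  have hmaps : ∀ x ∈ range n, ((c * x + d) % n).toNat ∈ range n := by
    intro x hx
    have hn : (0 : ℤ) < n := by simp only [mem_range] at hx; omega
    have := Int.emod_lt_of_pos (c * x + d) hn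
    simp only [mem_range]
    omega
  have hinj := injOn_range_emod_affine n d hc
  refine sum_nbij _ hmaps hinj (surjOn_of_injOn_of_card_le _ hmaps hinj le_rfl) ?_
  intro x hx
  rw [Int.toNat_of_nonneg (Int.emod_nonneg _ (by simp only [mem_range] at hx; omega))]

theorem two_mul_card_filter_lt_emod_affine_add_one {n : ℕ} (hn : 0 < n) {a : ℤ} (b : ℤ)
    (ha : IsCoprime a n) (ha₁ : IsCoprime (a - 1) n) :
    2 * #((range n).filter fun x : ℕ => (x : ℤ) < (a * x + b) % n) + 1 = n := by
  set r : ℕ → ℤ := fun x => ((a - 1) * x + b) % n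
  set wrap : ℕ → ℤ := fun x => if n ≤ x + r x then 1 else 0
  have hr : ∀ x, 0 ≤ r x ∧ r x < n := fun x =>
    ⟨Int.emod_nonneg _ (by omega), Int.emod_lt_of_pos _ (by omega)⟩
  have hsplit : ∀ x ∈ range n, (a * x + b) % n = x + r x - n * wrap x := by
    intro x hx
    have hxn : (x : ℤ) < n := by simpa using hx
    have hcong : (a * x + b) % n = (x + r x) % n := by
      simp only [r, Int.add_emod_emod]
      ring_nf
    rw [hcong, Int.emod_add_eq_sub_ite (by omega) hxn (hr x).1 (hr x).2]
  have hgauss : (∑ x ∈ range n, (x : ℤ)) * 2 = n * (n - 1) := by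
    have := congrArg (Nat.cast : ℕ → ℤ) (sum_range_id_mul_two n)
    rwa [Nat.cast_mul, Nat.cast_mul, Nat.cast_pred hn, Nat.cast_sum, Nat.cast_ofNat] at this
  have hwrap : 2 * ∑ x ∈ range n, wrap x = n - 1 := by
    have h := sum_range_emod_affine n b ha id
    have h₁ := sum_range_emod_affine n b ha₁ id
    simp only [id, sum_congr rfl hsplit, sum_sub_distrib, sum_add_distrib, ← mul_sum] at h h₁
    have : (n : ℤ) * (2 * ∑ x ∈ range n, wrap x) = n * (n - 1) := by linarith
    exact mul_left_cancel₀ (by omega) this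
  have hzero : ∑ x ∈ range n, (if r x = 0 then 1 else 0 : ℤ) = 1 := by
    rw [sum_range_emod_affine n b ha₁ (fun y => if y = 0 then (1 : ℤ) else 0)]
    simp [hn]
  have hindicator : ∀ x ∈ range n, (if (x : ℤ) < (a * x + b) % n then 1 else 0 : ℤ)
      = 1 - wrap x - (if r x = 0 then 1 else 0) := by
    intro x hx
    have hxn : (x : ℤ) < n := by simpa using hx
    have := hr x
    rw [hsplit x hx]
    simp only [wrap]
    split_ifs <;> omega
  have hcount := sum_congr rfl hindicator
  rw [sum_boole, sum_sub_distrib, sum_sub_distrib, hzero] at hcount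
  simp only [sum_const, card_range, nsmul_eq_mul, mul_one] at hcount
  omega

theorem stmt_0_general (p : ℕ) (hp : p.Prime) (a b : ℤ)
    (ha : ¬ (p : ℤ) ∣ a * (1 - a)) :
    ((Finset.range p).filter
      (fun x : ℕ => (a * (x : ℤ) + b) % p > (x : ℤ))).card = (p - 1) / 2 := by
  have hpZ : Prime (p : ℤ) := Nat.prime_iff_prime_int.mp hp
  have hcop : IsCoprime a p := (hpZ.coprime_iff_not_dvd.mpr fun h => ha (h.mul_right _)).symm
  have hcop₁ : IsCoprime (a - 1) p := by
    refine (hpZ.coprime_iff_not_dvd.mpr fun h => ha (Dvd.dvd.mul_left ?_ a)).symm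
    simpa using h.neg_right
  have h := two_mul_card_filter_lt_emod_affine_add_one hp.pos b hcop hcop₁
  simp only [gt_iff_lt]
  omega

theorem stmt_0 (p : ℕ) (hp : p.Prime) (hodd : Odd p) (a b : ℤ)
    (ha : ¬ (p : ℤ) ∣ a * (1 - a)) :
    ((Finset.range p).filter
      (fun x : ℕ => (a * (x : ℤ) + b) % p > (x : ℤ))).card = (p - 1) / 2 :=
  stmt_0_general p hp a b ha
end

section
/- Let p be a prime with p ≡ 1 (mod 4). Then for every integer a with 2 ≤ a ≤ p-1, the number of integers x with 1 ≤ x ≤ (p-1)/2 such that {x^2}_p > {a·x^2}_p equals (p-1)/4. -/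
/-- `N_p(a,b)`: number of `x` with `1 ≤ x ≤ (p-1)/2` and `{x²+b}_p > {a·x²+b}_p`. -/
def Np (p : ℕ) (a b : ℤ) : ℕ :=
  ((Finset.Icc 1 ((p - 1) / 2)).filter
    (fun x : ℕ => ((x : ℤ) ^ 2 + b) % p > (a * (x : ℤ) ^ 2 + b) % p)).card

/-!
Since `p ≡ 1 (mod 4)`, there is `z` with `z² = -1` in `ZMod p`. The map `x ↦ |z x|` (absolute
least residue) is an involution of `{1, …, (p-1)/2}` that sends `x²` to `-x²`. For `u ≠ 0` we have
`{-u}_p = p - {u}_p`, so it exchanges the `x` with `{x²}_p > {a x²}_p` and those with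
`{x²}_p < {a x²}_p`; equality never occurs because `a ≢ 0, 1`. Hence exactly half of the
`(p-1)/2` values of `x` are counted.
-/

open Finset

theorem Finset.two_mul_card_filter_of_involution {α : Type*} {s : Finset α} {P : α → Prop}
    [DecidablePred P] (σ : α → α) (hσ : ∀ x ∈ s, σ x ∈ s) (hσσ : ∀ x ∈ s, σ (σ x) = x)
    (hP : ∀ x ∈ s, P (σ x) ↔ ¬ P x) : 2 * #{x ∈ s | P x} = #s := by
  have hswap : #{x ∈ s | P x} = #{x ∈ s | ¬ P x} := by
    refine card_nbij' σ σ ?_ ?_ (fun x hx => hσσ x (mem_filter.1 hx).1)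
      (fun x hx => hσσ x (mem_filter.1 hx).1)
    · intro x hx
      simp only [coe_filter, Set.mem_ofPred_eq] at hx ⊢
      exact ⟨hσ x hx.1, fun h => (hP x hx.1).1 h hx.2⟩
    · intro x hx
      simp only [coe_filter, Set.mem_ofPred_eq] at hx ⊢
      exact ⟨hσ x hx.1, (hP x hx.1).2 hx.2⟩
  rw [← card_filter_add_card_filter_not (s := s) P, ← hswap, two_mul]

namespace ZMod

variable {n : ℕ}

theorem val_neg_lt_val_neg_iff [NeZero n] {u v : ZMod n} (hu : u ≠ 0) (hv : v ≠ 0) :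
    (-u).val < (-v).val ↔ v.val < u.val := by
  rw [neg_val, neg_val, if_neg hu, if_neg hv]
  have := u.val_lt
  have := v.val_lt
  omega

def mulFold (z : ZMod n) (x : ℕ) : ℕ := (z * x).valMinAbs.natAbs

theorem mulFold_le_half [NeZero n] (z : ZMod n) (x : ℕ) : mulFold z x ≤ n / 2 :=
  natAbs_valMinAbs_le _

theorem natCast_mulFold_sq [NeZero n] (z : ZMod n) (x : ℕ) :
    (mulFold z x : ZMod n) ^ 2 = z ^ 2 * x ^ 2 := by
  rw [mulFold, natCast_natAbs_valMinAbs]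
  split_ifs <;> ring

theorem mulFold_mulFold [NeZero n] {z : ZMod n} (hz : z ^ 2 = -1) {x : ℕ} (hx : x ≤ n / 2) :
    mulFold z (mulFold z x) = x := by
  have key : z * (mulFold z x : ZMod n) = x ∨ z * (mulFold z x : ZMod n) = -x := by
    rw [mulFold, natCast_natAbs_valMinAbs]
    split_ifs
    · right; linear_combination x * hz
    · left; linear_combination -x * hz
  rw [mulFold, natAbs_valMinAbs_eq_natAbs_valMinAbs.2 key, valMinAbs_natCast_of_le_half hx,
    Int.natAbs_natCast]

end ZMod

open ZMod

theorem card_filter_val_mul_sq_lt {p : ℕ} [Fact p.Prime] (hp4 : p % 4 = 1) {a : ZMod p}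
    (ha0 : a ≠ 0) (ha1 : a ≠ 1) :
    #{x ∈ Icc 1 ((p - 1) / 2) |
      (a * ((x : ℕ) : ZMod p) ^ 2).val < (((x : ℕ) : ZMod p) ^ 2).val} = (p - 1) / 4 := by
  obtain ⟨z, hz⟩ : IsSquare (-1 : ZMod p) := exists_sq_eq_neg_one_iff.2 (by omega)
  replace hz : z ^ 2 = -1 := by rw [hz]; ring
  have hhalf : (p - 1) / 2 = p / 2 := by omega
  have hcast_ne_zero : ∀ x ∈ Icc (1 : ℕ) (p / 2), ((x : ℕ) : ZMod p) ≠ 0 := by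
    intro x hx h
    rw [mem_Icc] at hx
    have := Nat.le_of_dvd (by omega) ((natCast_eq_zero_iff x p).1 h)
    omega
  have hz0 : z ≠ 0 := by rintro rfl; simp at hz
  suffices 2 * #{x ∈ Icc (1 : ℕ) (p / 2) |
      (a * ((x : ℕ) : ZMod p) ^ 2).val < (((x : ℕ) : ZMod p) ^ 2).val} = #(Icc 1 (p / 2)) by
    rw [Nat.card_Icc] at this
    rw [hhalf]
    omega
  refine two_mul_card_filter_of_involution (mulFold z) (fun x hx => ?_)
    (fun x hx => mulFold_mulFold hz (mem_Icc.1 hx).2) (fun x hx => ?_)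
  · refine mem_Icc.2 ⟨Nat.one_le_iff_ne_zero.2 ?_, mulFold_le_half z x⟩
    simpa [mulFold] using mul_ne_zero hz0 (hcast_ne_zero x hx)
  · have hsq : ((x : ℕ) : ZMod p) ^ 2 ≠ 0 := pow_ne_zero 2 (hcast_ne_zero x hx)
    have hne : (a * ((x : ℕ) : ZMod p) ^ 2).val ≠ (((x : ℕ) : ZMod p) ^ 2).val := fun h =>
      ha1 (mul_left_eq_self₀.1 (val_injective p h) |>.resolve_right hsq)
    rw [natCast_mulFold_sq, hz, neg_one_mul, mul_neg,
      val_neg_lt_val_neg_iff (mul_ne_zero ha0 hsq) hsq]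
    omega

theorem stmt_1 (p : ℕ) (hp : p.Prime) (hp4 : p % 4 = 1) (a : ℤ)
    (ha : 2 ≤ a) (ha' : a ≤ (p : ℤ) - 1) :
    Np p a 0 = (p - 1) / 4 := by
  have : Fact p.Prime := ⟨hp⟩
  have hval : ((a : ZMod p).val : ℤ) = a := by
    rw [val_intCast, Int.emod_eq_of_lt (by omega) (by omega)]
  have ha0 : (a : ZMod p) ≠ 0 := by
    intro h; rw [h, val_zero] at hval; omega
  have ha1 : (a : ZMod p) ≠ 1 := by
    have : Fact (1 < p) := ⟨hp.one_lt⟩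
    intro h; rw [h, val_one] at hval; omega
  rw [← card_filter_val_mul_sq_lt hp4 ha0 ha1, Np]
  congr 1
  refine filter_congr fun x _ => ?_
  rw [add_zero, add_zero, gt_iff_lt, ← Int.ofNat_lt, ← val_intCast, ← val_intCast]
  push_cast
  rfl
end

section
/- Let p > 3 be a prime with p ≡ 3 (mod 4). Then there exist integers a, a' with 2 ≤ a, a' ≤ p-2 such that (a/p) = 1, (a(1-a)/p) = 1, and (a'/p) = -1, (a'(1-a')/p) = 1. -/
/-!
The residue `a` comes from the Pythagorean triple `3² + 4² = 5²`: `a = (3/5)²` and `1 - a = (4/5)²`.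
For `a'` both `a'` and `1 - a'` must be non-residues. Since `p ≡ 3 (mod 4)`, `-1` is a
non-residue, so `a' = 2` works when `2` is a non-residue. Otherwise take `a' = -s²` with `1 + s²` a
non-residue; such an `s` exists, since otherwise the squares would be closed under `· + 1` and
contain `-1`, and `s² ≠ 1` because `2` is a square.
-/

theorem exists_not_isSquare_one_add_sq {F : Type*} [Field F] [Finite F]
    (h : ¬IsSquare (-1 : F)) : ∃ s : F, ¬IsSquare (1 + s ^ 2) := by
  by_contra! hsq
  have hnat : ∀ n : ℕ, IsSquare (n : F) := by
    intro n
    induction n with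
    | zero => exact ⟨0, by simp⟩
    | succ n ih =>
      obtain ⟨s, hs⟩ := ih
      simpa [hs, sq, add_comm] using hsq s
  have hpos : 0 < ringChar F := Nat.pos_of_ne_zero (CharP.ringChar_ne_zero_of_finite F)
  apply h
  simpa [Nat.cast_pred hpos] using hnat (ringChar F - 1)

section QuadraticChar

variable {F : Type*} [Field F] [Fintype F] [DecidableEq F]

theorem exists_quadraticChar_eq_one_and_one_sub_eq_one (h2 : (2 : F) ≠ 0) (h3 : (3 : F) ≠ 0)
    (h5 : (5 : F) ≠ 0) :
    ∃ x : F, quadraticChar F x = 1 ∧ quadraticChar F (1 - x) = 1 := by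
  have h4 : (4 : F) ≠ 0 := by
    have h := pow_ne_zero 2 h2
    norm_num at h
    exact h
  refine ⟨(3 / 5) ^ 2, quadraticChar_sq_one' (div_ne_zero h3 h5), ?_⟩
  have hsub : 1 - (3 / 5 : F) ^ 2 = (4 / 5) ^ 2 := by field_simp; norm_num
  rw [hsub]
  exact quadraticChar_sq_one' (div_ne_zero h4 h5)

theorem exists_quadraticChar_eq_neg_one_and_one_sub_eq_neg_one (h : ¬IsSquare (-1 : F))
    (h3 : (3 : F) ≠ 0) :
    ∃ y : F, y ≠ -1 ∧ quadraticChar F y = -1 ∧ quadraticChar F (1 - y) = -1 := by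
  have hχ : quadraticChar F (-1) = -1 := quadraticChar_neg_one_iff_not_isSquare.mpr h
  by_cases h2 : IsSquare (2 : F)
  · obtain ⟨s, hs⟩ := exists_not_isSquare_one_add_sq h
    have hs0 : s ≠ 0 := by rintro rfl; exact hs (by simp)
    refine ⟨-s ^ 2, fun hs1 => hs ?_, ?_, ?_⟩
    · rwa [neg_inj.mp hs1, one_add_one_eq_two]
    · rw [neg_eq_neg_one_mul, map_mul, hχ, quadraticChar_sq_one' hs0, mul_one]
    · rw [sub_neg_eq_add]
      exact quadraticChar_neg_one_iff_not_isSquare.mpr hs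
  · refine ⟨2, fun h2' => h3 ?_, quadraticChar_neg_one_iff_not_isSquare.mpr h2, ?_⟩
    · linear_combination h2'
    · norm_num [hχ]

end QuadraticChar

theorem ZMod.exists_intCast_eq_of_ne {n : ℕ} [NeZero n] (x : ZMod n) (h0 : x ≠ 0) (h1 : x ≠ 1)
    (hm1 : x ≠ -1) : ∃ a : ℤ, 2 ≤ a ∧ a ≤ n - 2 ∧ (a : ZMod n) = x := by
  have hval : ∀ k : ℕ, x.val = k → x = k := fun k hk => by rw [← x.natCast_zmod_val, hk]
  have hv0 : x.val ≠ 0 := fun hk => h0 (by simpa using hval 0 hk)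
  have hv1 : x.val ≠ 1 := fun hk => h1 (by simpa using hval 1 hk)
  have hvm1 : x.val ≠ n - 1 := fun hk =>
    hm1 (by simpa [Nat.cast_pred (NeZero.pos n)] using hval (n - 1) hk)
  have hlt := x.val_lt
  exact ⟨x.val, by omega, by omega, by simp⟩

theorem exists_legendreSym_eq_and_mul_one_sub_eq_one {p : ℕ} [Fact p.Prime] (x : ZMod p)
    (hm1 : x ≠ -1) (hx : quadraticChar (ZMod p) x ≠ 0)
    (h : quadraticChar (ZMod p) (1 - x) = quadraticChar (ZMod p) x) :
    ∃ a : ℤ, 2 ≤ a ∧ a ≤ p - 2 ∧ legendreSym p a = quadraticChar (ZMod p) x ∧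
      legendreSym p (a * (1 - a)) = 1 := by
  have h0 : x ≠ 0 := fun h0 => hx (by simp [h0])
  have h1 : x ≠ 1 := fun h1 => hx (by rw [← h, h1, sub_self, quadraticChar_zero])
  obtain ⟨a, ha2, hap, rfl⟩ := ZMod.exists_intCast_eq_of_ne x h0 h1 hm1
  refine ⟨a, ha2, hap, rfl, ?_⟩
  rw [legendreSym, Int.cast_mul, Int.cast_sub, Int.cast_one, map_mul, h, ← sq]
  exact quadraticChar_sq_one h0

theorem stmt_9 (p : ℕ) [Fact p.Prime] (hp4 : p % 4 = 3) (hp3 : 3 < p) :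
    ∃ a a' : ℤ, 2 ≤ a ∧ a ≤ (p : ℤ) - 2 ∧ 2 ≤ a' ∧ a' ≤ (p : ℤ) - 2 ∧
      legendreSym p a = 1 ∧ legendreSym p (a * (1 - a)) = 1 ∧
      legendreSym p a' = -1 ∧ legendreSym p (a' * (1 - a')) = 1 := by
  have hm1 : ¬IsSquare (-1 : ZMod p) := fun h => ZMod.exists_sq_eq_neg_one_iff.mp h hp4
  have hχm1 : quadraticChar (ZMod p) (-1) = -1 := quadraticChar_neg_one_iff_not_isSquare.mpr hm1
  have hcast : ∀ k : ℕ, 0 < k → k < p → (k : ZMod p) ≠ 0 := fun k hk hkp => by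
    rw [Ne, ZMod.natCast_eq_zero_iff]
    exact Nat.not_dvd_of_pos_of_lt hk hkp
  -- `p % 4 = 3` rules out `p = 5`
  have hp7 : 7 ≤ p := by omega
  obtain ⟨x, hx, hx'⟩ := exists_quadraticChar_eq_one_and_one_sub_eq_one (F := ZMod p)
    (by exact_mod_cast hcast 2 (by norm_num) (by omega))
    (by exact_mod_cast hcast 3 (by norm_num) (by omega))
    (by exact_mod_cast hcast 5 (by norm_num) (by omega))
  obtain ⟨y, hym1, hy, hy'⟩ := exists_quadraticChar_eq_neg_one_and_one_sub_eq_neg_one hm1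
    (by exact_mod_cast hcast 3 (by norm_num) (by omega))
  obtain ⟨a, ha2, hap, ha, ha'⟩ := exists_legendreSym_eq_and_mul_one_sub_eq_one x
    (by rintro rfl; simp [hχm1] at hx) (by simp [hx]) (hx'.trans hx.symm)
  obtain ⟨b, hb2, hbp, hb, hb'⟩ := exists_legendreSym_eq_and_mul_one_sub_eq_one y
    hym1 (by simp [hy]) (hy'.trans hy.symm)
  exact ⟨a, b, ha2, hap, hb2, hbp, ha.trans hx, ha', hb.trans hy, hb'⟩
end

section
/- Let p be an odd prime, b an integer, and a an integer with 2 ≤ a ≤ p-1 and (a/p) = 1. Then N_p(a,b) = (p-1)/2 - (1/p)·Σ_{z=1,...,p-1, (z/p)=δ} z, where δ = (a(1-a)/p). In particular, for quadratic residues a, the value N_p(a,b) does not depend on b. -/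
/-!
Write `u = {x²+b}_p`, `v = {a·x²+b}_p` and `w = {(a-1)·x²}_p`. Since `w ≡ v - u`, we have
`w = v - u + p·[u > v]`, so `p·N_p(a,b) = Σ w + Σ u - Σ v`, sums over `1 ≤ x ≤ (p-1)/2`.
For `p ∤ t`, the map `x ↦ {t·x²}_p` is a bijection from `[1, (p-1)/2]` onto the residues
`z ∈ [1, p-1]` with `(z/p) = (t/p)`. As `(a/p) = 1`, this makes `Σ u = Σ v`, and it turns `Σ w`
into the sum of the `z` with `(z/p) = ((a-1)/p)`. The reflection `z ↦ p - z` exchanges this class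
with the class of `1 - a`, which is that of `a(1-a)`, giving `Σ w = p(p-1)/2 - Σ_{(z/p)=δ} z`.
-/

open Finset

theorem Int.sub_emod_eq_emod_sub_emod_add_ite (x y : ℤ) {q : ℤ} (hq : 0 < q) :
    (x - y) % q = x % q - y % q + if x % q < y % q then q else 0 := by
  have hx := emod_nonneg x hq.ne'
  have hx' := emod_lt_of_pos x hq
  have hy := emod_nonneg y hq.ne'
  have hy' := emod_lt_of_pos y hq
  rw [Int.sub_emod]
  split_ifs
  · rw [← add_emod_right, emod_eq_of_lt] <;> omega
  · rw [emod_eq_of_lt] <;> omega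

theorem Np_mul_eq_sum (p : ℕ) (hp : 0 < p) (a b : ℤ) :
    (p : ℤ) * Np p a b = ∑ x ∈ Icc 1 ((p - 1) / 2),
      (((a - 1) * (x : ℤ) ^ 2) % p + ((x : ℤ) ^ 2 + b) % p - (a * (x : ℤ) ^ 2 + b) % p) := by
  rw [Np, natCast_card_filter, mul_sum]
  refine sum_congr rfl fun x _ => ?_
  have hw : (a - 1) * (x : ℤ) ^ 2 = (a * x ^ 2 + b) - (x ^ 2 + b) := by ring
  rw [hw, Int.sub_emod_eq_emod_sub_emod_add_ite _ _ (by omega), mul_ite, mul_one, mul_zero]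
  simp only [gt_iff_lt]
  ring

theorem ZMod.natCast_ne_zero_of_pos_of_lt {n x : ℕ} (hx : 0 < x) (hxn : x < n) :
    (x : ZMod n) ≠ 0 := by
  rw [Ne, ZMod.natCast_eq_zero_iff]
  exact fun h => absurd (Nat.le_of_dvd hx h) (by omega)

noncomputable def legendreClass (p : ℕ) [Fact p.Prime] (t : ℤ) : Finset ℤ :=
  {z ∈ Icc 1 ((p : ℤ) - 1) | legendreSym p z = legendreSym p t}

section legendreClass

variable {p : ℕ} [Fact p.Prime]

theorem legendreClass_congr {s t : ℤ} (h : legendreSym p s = legendreSym p t) :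
    legendreClass p s = legendreClass p t := by
  simp only [legendreClass, h]

theorem sub_mem_legendreClass_neg {t z : ℤ} (hz : z ∈ legendreClass p t) :
    (p : ℤ) - z ∈ legendreClass p (-t) := by
  simp only [legendreClass, mem_filter, mem_Icc] at hz ⊢
  refine ⟨⟨by omega, by omega⟩, ?_⟩
  rw [legendreSym.mod, show ((p : ℤ) - z) % p = (-1 * z) % p by simp,
    ← legendreSym.mod, legendreSym.mul, hz.2, ← legendreSym.mul, neg_one_mul]

theorem emod_mul_sq_mem_legendreClass {t : ℤ} (ht : (t : ZMod p) ≠ 0) {x : ℕ}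
    (hx : x ∈ Icc 1 ((p - 1) / 2)) : t * (x : ℤ) ^ 2 % p ∈ legendreClass p t := by
  rw [mem_Icc] at hx
  have hx0 : ((x : ℤ) : ZMod p) ≠ 0 := by
    exact_mod_cast ZMod.natCast_ne_zero_of_pos_of_lt (n := p) (by omega) (by omega)
  have hne : t * (x : ℤ) ^ 2 % p ≠ 0 := by
    intro h
    have := congrArg (fun n : ℤ => (n : ZMod p)) h
    simp only [ZMod.intCast_mod, Int.cast_mul, Int.cast_pow, Int.cast_zero] at this
    exact mul_ne_zero ht (pow_ne_zero 2 hx0) this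
  have hp : (0 : ℤ) < p := by exact_mod_cast (Fact.out : p.Prime).pos
  have := Int.emod_nonneg (t * (x : ℤ) ^ 2) hp.ne'
  have := Int.emod_lt_of_pos (t * (x : ℤ) ^ 2) hp
  simp only [legendreClass, mem_filter, mem_Icc]
  refine ⟨⟨by omega, by omega⟩, ?_⟩
  rw [← legendreSym.mod, legendreSym.mul, legendreSym.sq_one' p hx0, mul_one]

theorem injOn_emod_mul_sq {t : ℤ} (ht : (t : ZMod p) ≠ 0) :
    Set.InjOn (fun x : ℕ => t * (x : ℤ) ^ 2 % p) (Icc 1 ((p - 1) / 2) : Finset ℕ) := by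
  intro x hx y hy hxy
  have hsq : (x : ZMod p) ^ 2 = (y : ZMod p) ^ 2 := by
    have := congrArg (fun n : ℤ => (n : ZMod p)) hxy
    simp only [ZMod.intCast_mod, Int.cast_mul, Int.cast_pow, Int.cast_natCast] at this
    exact mul_left_cancel₀ ht this
  simp only [coe_Icc, Set.mem_Icc] at hx hy
  rcases sq_eq_sq_iff_eq_or_eq_neg.mp hsq with h | h
  · rw [ZMod.natCast_eq_natCast_iff', Nat.mod_eq_of_lt (by omega),
      Nat.mod_eq_of_lt (by omega)] at h
    exact h
  · have hsum : ((x + y : ℕ) : ZMod p) = 0 := by push_cast; rw [h, neg_add_cancel]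
    exact absurd hsum (ZMod.natCast_ne_zero_of_pos_of_lt (by omega) (by omega))

theorem surjOn_emod_mul_sq (hodd : Odd p) {t : ℤ} (ht : (t : ZMod p) ≠ 0) :
    Set.SurjOn (fun x : ℕ => t * (x : ℤ) ^ 2 % p) (Icc 1 ((p - 1) / 2) : Finset ℕ)
      (legendreClass p t) := by
  intro z hz
  simp only [legendreClass, coe_filter, mem_Icc, Set.mem_ofPred_eq] at hz
  obtain ⟨⟨hz1, hzp⟩, hzt⟩ := hz
  have hz0 : (z : ZMod p) ≠ 0 := by
    rw [Ne, ZMod.intCast_zmod_eq_zero_iff_dvd]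
    exact fun h => absurd (Int.le_of_dvd (by omega) h) (by omega)
  obtain ⟨r, hr⟩ : IsSquare ((z * t : ℤ) : ZMod p) := by
    rw [← legendreSym.eq_one_iff p (by push_cast; exact mul_ne_zero hz0 ht),
      legendreSym.mul, hzt, ← sq, legendreSym.sq_one p ht]
  -- `z = t·(r/t)²`, and `±(r/t)` has a representative in `[1, p/2]`.
  set s : ZMod p := r / t
  have hts : (t : ZMod p) * s ^ 2 = z := by
    push_cast at hr
    rw [div_pow, sq, ← hr]
    field_simp
  set x := s.valMinAbs.natAbs
  have hxs : (x : ZMod p) ^ 2 = s ^ 2 := by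
    rw [ZMod.natCast_natAbs_valMinAbs]
    split_ifs <;> simp
  have hx0 : x ≠ 0 := by
    intro hx
    rw [Int.natAbs_eq_zero, ZMod.valMinAbs_eq_zero] at hx
    rw [hx] at hts
    simp [eq_comm, hz0] at hts
  have hxp := ZMod.natAbs_valMinAbs_le s
  refine ⟨x, ?_, ?_⟩
  · have := Nat.odd_iff.mp hodd
    simp only [coe_Icc, Set.mem_Icc]
    omega
  · show t * (x : ℤ) ^ 2 % p = z
    rw [← Int.emod_eq_of_lt (by omega : 0 ≤ z) (by omega : z < p),
      ← ZMod.intCast_eq_intCast_iff']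
    push_cast
    rw [hxs, hts]

theorem sum_emod_mul_sq_eq_sum_legendreClass {M : Type*} [AddCommMonoid M] (hodd : Odd p)
    {t : ℤ} (ht : (t : ZMod p) ≠ 0) (f : ℤ → M) :
    ∑ x ∈ Icc 1 ((p - 1) / 2), f (t * (x : ℤ) ^ 2 % p) = ∑ z ∈ legendreClass p t, f z :=
  sum_nbij _ (fun _ hx => emod_mul_sq_mem_legendreClass ht hx) (injOn_emod_mul_sq ht)
    (surjOn_emod_mul_sq hodd ht) fun _ _ => rfl

theorem card_legendreClass (hodd : Odd p) {t : ℤ} (ht : (t : ZMod p) ≠ 0) :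
    #(legendreClass p t) = (p - 1) / 2 := by
  rw [← card_nbij _ (fun _ hx => emod_mul_sq_mem_legendreClass ht hx) (injOn_emod_mul_sq ht)
    (surjOn_emod_mul_sq hodd ht), Nat.card_Icc, Nat.add_sub_cancel]

theorem sum_legendreClass_neg (hodd : Odd p) {t : ℤ} (ht : (t : ZMod p) ≠ 0) :
    ∑ z ∈ legendreClass p (-t), z = ((p - 1) / 2 : ℕ) * p - ∑ z ∈ legendreClass p t, z := by
  have hreflect : ∑ z ∈ legendreClass p (-t), z = ∑ z ∈ legendreClass p t, ((p : ℤ) - z) := by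
    refine sum_nbij' (fun z => (p : ℤ) - z) (fun z => (p : ℤ) - z) (fun z hz => ?_)
      (fun z hz => sub_mem_legendreClass_neg hz) (fun _ _ => by ring) (fun _ _ => by ring)
      (fun _ _ => by ring)
    simpa using sub_mem_legendreClass_neg hz
  rw [hreflect, sum_sub_distrib, sum_const, card_legendreClass hodd ht, nsmul_eq_mul, mul_comm]

end legendreClass

theorem Np_mul_add_sum_legendreClass (p : ℕ) [Fact p.Prime] (hodd : Odd p) (a b : ℤ)
    (ha : 2 ≤ a) (ha' : a ≤ (p : ℤ) - 1) (haQR : legendreSym p a = 1) :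
    (p : ℤ) * Np p a b + ∑ z ∈ legendreClass p (a * (1 - a)), z = ((p - 1) / 2 : ℕ) * p := by
  have hp := (Fact.out : p.Prime).pos
  have ha0 : (a : ZMod p) ≠ 0 := fun h => by
    simpa [haQR] using (legendreSym.eq_zero_iff p a).mpr h
  have ha1 : ((a - 1 : ℤ) : ZMod p) ≠ 0 := by
    rw [Ne, ZMod.intCast_zmod_eq_zero_iff_dvd]
    exact fun h => absurd (Int.le_of_dvd (by omega) h) (by omega)
  have hu := sum_emod_mul_sq_eq_sum_legendreClass hodd (t := 1) (by simp) fun z => (z + b) % p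
  have hv := sum_emod_mul_sq_eq_sum_legendreClass hodd ha0 fun z => (z + b) % p
  have hw := sum_emod_mul_sq_eq_sum_legendreClass hodd ha1 id
  simp only [Int.emod_add_emod, one_mul, id] at hu hv hw
  have hclass_a : legendreClass p a = legendreClass p 1 :=
    legendreClass_congr (by rw [haQR, legendreSym.at_one])
  have hclass_δ : legendreClass p (a * (1 - a)) = legendreClass p (-(a - 1)) :=
    legendreClass_congr (by rw [legendreSym.mul, haQR, one_mul, neg_sub])
  rw [Np_mul_eq_sum p hp, sum_sub_distrib, sum_add_distrib, hu, hv, hclass_a,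
    hw, hclass_δ, sum_legendreClass_neg hodd ha1]
  simp

theorem stmt_11 (p : ℕ) [Fact p.Prime] (hodd : Odd p) (a b : ℤ)
    (ha : 2 ≤ a) (ha' : a ≤ (p : ℤ) - 1) (haQR : legendreSym p a = 1) :
    ((Np p a b : ℚ) = ((p : ℚ) - 1) / 2 - (1 / (p : ℚ)) *
      ∑ z ∈ (Finset.Icc (1 : ℤ) ((p : ℤ) - 1)).filter
        (fun z => legendreSym p z = legendreSym p (a * (1 - a))), (z : ℚ)) ∧
    ∀ b' : ℤ, Np p a b' = Np p a b := by
  have hhalf : (((p - 1) / 2 : ℕ) : ℚ) = ((p : ℚ) - 1) / 2 := by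
    obtain ⟨k, rfl⟩ := hodd
    rw [show (2 * k + 1 - 1) / 2 = k by omega]
    push_cast
    ring
  have hp : (p : ℚ) ≠ 0 := by exact_mod_cast (Fact.out : p.Prime).ne_zero
  have hformula : ∀ b : ℤ, (Np p a b : ℚ) = ((p : ℚ) - 1) / 2 - (1 / (p : ℚ)) *
      ∑ z ∈ legendreClass p (a * (1 - a)), (z : ℚ) := fun b => by
    have h := congrArg (fun n : ℤ => (n : ℚ)) (Np_mul_add_sum_legendreClass p hodd a b ha ha' haQR)
    simp only [Int.cast_add, Int.cast_mul, Int.cast_natCast, Int.cast_sum, hhalf] at h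
    field_simp
    linarith
  exact ⟨hformula b, fun b' => by exact_mod_cast (hformula b').trans (hformula b).symm⟩
end

section
/- Let p ≡ 1 (mod 4) be a prime and b an integer. Then for every integer a with 2 ≤ a ≤ p-1, we have N_p(a,b) = (p-1)/4 whenever (a/p) = 1; that is, the set {N_p(a,b) : 1 < a < p, (a/p) = 1} equals {(p-1)/4}. -/
open Finset

namespace ZMod

variable {p : ℕ}

lemma natCast_ne_zero_of_mem_Icc {x : ℕ} (hx : x ∈ Icc 1 ((p - 1) / 2)) :
    (x : ZMod p) ≠ 0 := by
  rw [mem_Icc] at hx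
  rw [Ne, ← val_eq_zero, val_natCast_of_lt (by omega)]
  omega

lemma intCast_ne_intCast_of_lt {a b : ℤ} (ha : 0 ≤ a) (hap : a < p) (hb : 0 ≤ b) (hbp : b < p)
    (hab : a ≠ b) : (a : ZMod p) ≠ b := by
  rwa [Ne, intCast_eq_intCast_iff', Int.emod_eq_of_lt ha hap, Int.emod_eq_of_lt hb hbp]

section NeZero

variable [NeZero p]

def halfRep (z : ZMod p) : ℕ := min z.val (p - z.val)

lemma halfRep_cast_eq_or (z : ZMod p) :
    (halfRep z : ZMod p) = z ∨ (halfRep z : ZMod p) = -z := by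
  rcases le_total z.val (p - z.val) with h | h
  · left
    rw [halfRep, min_eq_left h, natCast_zmod_val]
  · right
    rw [halfRep, min_eq_right h, Nat.cast_sub z.val_le, natCast_self, natCast_zmod_val, zero_sub]

lemma halfRep_neg (z : ZMod p) : halfRep (-z) = halfRep z := by
  have := z.val_lt
  rw [halfRep, halfRep, neg_val]
  split_ifs with hz
  · simp [hz]
  · omega

lemma halfRep_natCast {x : ℕ} (hx : 2 * x ≤ p) : halfRep (x : ZMod p) = x := by
  have := NeZero.pos p
  rw [halfRep, val_natCast_of_lt (by omega)]
  omega

lemma halfRep_mem_Icc (hp : p % 2 = 1) {z : ZMod p} (hz : z ≠ 0) :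
    halfRep z ∈ Icc 1 ((p - 1) / 2) := by
  have := z.val_lt
  have := (val_ne_zero z).2 hz
  rw [mem_Icc, halfRep]
  omega

lemma halfRep_mul_halfRep_mul {c d : ZMod p} (hdc : d * c = 1) {x : ℕ} (hx : 2 * x ≤ p) :
    halfRep (d * (halfRep (c * (x : ZMod p)) : ZMod p)) = x := by
  rcases halfRep_cast_eq_or (c * (x : ZMod p)) with h | h <;> rw [h]
  · rw [← mul_assoc, hdc, one_mul, halfRep_natCast hx]
  · rw [mul_neg, ← mul_assoc, hdc, one_mul, halfRep_neg, halfRep_natCast hx]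

lemma ite_val_lt_eq {y z : ZMod p} (hyz : y ≠ z) :
    (if z.val < y.val then (p : ℤ) else 0) = y.val - z.val - (y - z).val + p := by
  have := z.val_lt
  split_ifs with h
  · rw [val_sub h.le]
    omega
  · rw [← neg_sub z y, neg_val, if_neg (sub_ne_zero.2 hyz.symm), val_sub (not_lt.1 h)]
    omega

lemma natCast_mul_card_filter_val_lt {ι : Type*} (s : Finset ι) {y z : ι → ZMod p}
    (hyz : ∀ i ∈ s, y i ≠ z i) :
    (p : ℤ) * #{i ∈ s | (z i).val < (y i).val} =
      ∑ i ∈ s, ((y i).val : ℤ) - ∑ i ∈ s, ((z i).val : ℤ) - ∑ i ∈ s, ((y i - z i).val : ℤ) +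
        p * #s := by
  calc (p : ℤ) * #{i ∈ s | (z i).val < (y i).val}
      = ∑ i ∈ s, if (z i).val < (y i).val then (p : ℤ) else 0 := by
        rw [← sum_filter, sum_const, nsmul_eq_mul, mul_comm]
    _ = ∑ i ∈ s, (((y i).val : ℤ) - (z i).val - (y i - z i).val + p) :=
        sum_congr rfl fun i hi ↦ ite_val_lt_eq (hyz i hi)
    _ = _ := by
        rw [sum_add_distrib, sum_sub_distrib, sum_sub_distrib, sum_const, nsmul_eq_mul, mul_comm]

end NeZero

variable [Fact p.Prime]

/-- Multiplication by `c ^ 2` permutes the nonzero squares; on their parametrisation by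
`x ∈ [1, (p - 1) / 2]` this is the permutation `x ↦ halfRep (c * x)`. -/
lemma sum_Icc_sq_mul_sq {M : Type*} [AddCommMonoid M] (hp : p % 2 = 1) {c : ZMod p}
    (hc : c ≠ 0) (f : ZMod p → M) :
    ∑ x ∈ Icc 1 ((p - 1) / 2), f (c ^ 2 * (x : ZMod p) ^ 2) =
      ∑ x ∈ Icc 1 ((p - 1) / 2), f ((x : ZMod p) ^ 2) := by
  have two_mul_le {x : ℕ} (hx : x ∈ Icc 1 ((p - 1) / 2)) : 2 * x ≤ p := by
    rw [mem_Icc] at hx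
    omega
  refine sum_nbij' (fun x ↦ halfRep (c * (x : ZMod p))) (fun y ↦ halfRep (c⁻¹ * (y : ZMod p)))
    (fun x hx ↦ halfRep_mem_Icc hp (mul_ne_zero hc (natCast_ne_zero_of_mem_Icc hx)))
    (fun y hy ↦
      halfRep_mem_Icc hp (mul_ne_zero (inv_ne_zero hc) (natCast_ne_zero_of_mem_Icc hy)))
    (fun x hx ↦ halfRep_mul_halfRep_mul (inv_mul_cancel₀ hc) (two_mul_le hx))
    (fun y hy ↦ halfRep_mul_halfRep_mul (mul_inv_cancel₀ hc) (two_mul_le hy)) fun x _ ↦ ?_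
  rcases halfRep_cast_eq_or (c * (x : ZMod p)) with h | h <;> simp only [h] <;> ring_nf

lemma sum_Icc_val_mul_sq (hp4 : p % 4 = 1) {d : ZMod p} (hd : d ≠ 0) :
    ∑ x ∈ Icc 1 ((p - 1) / 2), ((d * (x : ZMod p) ^ 2).val : ℤ) = p * ((p - 1) / 4 : ℕ) := by
  obtain ⟨i, hi⟩ := exists_sq_eq_neg_one_iff.2 (by omega : p % 4 ≠ 3)
  have hi0 : i ≠ 0 := by
    rintro rfl
    simp at hi
  have hpair (x : ℕ) (hx : x ∈ Icc 1 ((p - 1) / 2)) :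
      ((d * (x : ZMod p) ^ 2).val : ℤ) + (d * (i ^ 2 * (x : ZMod p) ^ 2)).val = p := by
    have hx0 : d * (x : ZMod p) ^ 2 ≠ 0 :=
      mul_ne_zero hd (pow_ne_zero 2 (natCast_ne_zero_of_mem_Icc hx))
    have := (d * (x : ZMod p) ^ 2).val_lt
    rw [show d * (i ^ 2 * (x : ZMod p) ^ 2) = -(d * (x : ZMod p) ^ 2) by rw [sq i, ← hi]; ring,
      neg_val, if_neg hx0]
    omega
  have hswap := sum_Icc_sq_mul_sq (by omega) hi0 fun s ↦ ((d * s).val : ℤ)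
  have hsum := sum_add_distrib.symm.trans (sum_congr rfl hpair)
  have hcard : (p - 1) / 2 + 1 - 1 = 2 * ((p - 1) / 4) := by omega
  simp only [hswap, sum_const, Nat.card_Icc, hcard, nsmul_eq_mul, Nat.cast_mul, Nat.cast_ofNat]
    at hsum
  linarith

end ZMod

lemma Np_eq_card_filter_val_lt (p : ℕ) [NeZero p] (a b : ℤ) :
    Np p a b = #{x ∈ Icc 1 ((p - 1) / 2) |
      ((a : ZMod p) * ((x : ℕ) : ZMod p) ^ 2 + b).val < (((x : ℕ) : ZMod p) ^ 2 + b).val} := by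
  refine congrArg card (filter_congr fun x _ ↦ ?_)
  rw [gt_iff_lt, ← Nat.cast_lt (α := ℤ), ← ZMod.val_intCast, ← ZMod.val_intCast]
  push_cast
  rfl

theorem Np_eq_of_isSquare {p : ℕ} [Fact p.Prime] (hp4 : p % 4 = 1) {a : ℤ}
    (ha : IsSquare (a : ZMod p)) (ha0 : (a : ZMod p) ≠ 0) (ha1 : (a : ZMod p) ≠ 1) (b : ℤ) :
    Np p a b = (p - 1) / 4 := by
  obtain ⟨c, hc⟩ := ha
  have hc0 : c ≠ 0 := right_ne_zero_of_mul (hc ▸ ha0)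
  set y : ℕ → ZMod p := fun x ↦ (x : ZMod p) ^ 2 + b
  set z : ℕ → ZMod p := fun x ↦ (a : ZMod p) * (x : ZMod p) ^ 2 + b
  have hdiff (x : ℕ) : y x - z x = (1 - a) * (x : ZMod p) ^ 2 := by
    ring
  have h1a : 1 - (a : ZMod p) ≠ 0 := sub_ne_zero.2 ha1.symm
  have hcount := ZMod.natCast_mul_card_filter_val_lt (Icc 1 ((p - 1) / 2)) (y := y) (z := z)
    fun x hx ↦ by
      rw [Ne, ← sub_eq_zero, hdiff]
      exact mul_ne_zero h1a (pow_ne_zero 2 (ZMod.natCast_ne_zero_of_mem_Icc hx))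
  have hyz : ∑ x ∈ Icc 1 ((p - 1) / 2), ((z x).val : ℤ) =
      ∑ x ∈ Icc 1 ((p - 1) / 2), ((y x).val : ℤ) := by
    simp only [z, y, hc, ← sq]
    exact ZMod.sum_Icc_sq_mul_sq (by omega) hc0 fun s ↦ ((s + b).val : ℤ)
  have hk : (p - 1) / 2 + 1 - 1 = 2 * ((p - 1) / 4) := by omega
  simp only [hdiff, ZMod.sum_Icc_val_mul_sq hp4 h1a, Nat.card_Icc, hyz, hk, Nat.cast_mul,
    Nat.cast_ofNat] at hcount
  have hp0 : (p : ℤ) ≠ 0 := by exact_mod_cast NeZero.ne p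
  rw [Np_eq_card_filter_val_lt, ← Nat.cast_inj (R := ℤ), ← mul_right_inj' hp0, hcount]
  ring

theorem Np_eq_of_legendreSym_eq_one {p : ℕ} [Fact p.Prime] (hp4 : p % 4 = 1) {a : ℤ}
    (ha1 : 1 < a) (hap : a < p) (ha : legendreSym p a = 1) (b : ℤ) : Np p a b = (p - 1) / 4 := by
  have ha0 : (a : ZMod p) ≠ 0 := by
    simpa using
      ZMod.intCast_ne_intCast_of_lt (b := 0) (by omega) hap le_rfl (by omega) (by omega)
  have ha1' : (a : ZMod p) ≠ 1 := by
    simpa using ZMod.intCast_ne_intCast_of_lt (b := 1) (by omega) hap zero_le_one (by omega)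
      (by omega)
  exact Np_eq_of_isSquare hp4 ((legendreSym.eq_one_iff p ha0).1 ha) ha0 ha1' b

theorem stmt_12 (p : ℕ) [Fact p.Prime] (hp4 : p % 4 = 1) (b : ℤ) :
    (∀ a : ℤ, 1 < a → a < (p : ℤ) → legendreSym p a = 1 → Np p a b = (p - 1) / 4) ∧
    ((Finset.Ioo (1 : ℤ) (p : ℤ)).filter (fun a => legendreSym p a = 1)).image
      (fun a => Np p a b) = {(p - 1) / 4} := by
  refine ⟨fun a ha1 hap ha ↦ Np_eq_of_legendreSym_eq_one hp4 ha1 hap ha b, ?_⟩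
  have hp : (4 : ℤ) < p := by
    have := (Fact.out : p.Prime).two_le
    omega
  have h2 : ((2 : ℤ) : ZMod p) ≠ 0 := by
    simpa using ZMod.intCast_ne_intCast_of_lt (a := 2) (b := 0) (by omega) (by omega) le_rfl
      (by omega) (by omega)
  have h4 : legendreSym p 4 = 1 := by
    simpa using legendreSym.sq_one' p h2
  have hconst : Set.EqOn (fun a ↦ Np p a b) (fun _ ↦ (p - 1) / 4)
      ↑({a ∈ Ioo (1 : ℤ) p | legendreSym p a = 1} : Finset ℤ) := fun a ha ↦ by
    obtain ⟨ha', ha⟩ := mem_filter.1 ha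
    exact Np_eq_of_legendreSym_eq_one hp4 (mem_Ioo.1 ha').1 (mem_Ioo.1 ha').2 ha b
  rw [image_congr hconst, image_const ⟨4, mem_filter.2 ⟨mem_Ioo.2 ⟨by norm_num, hp⟩, h4⟩⟩]
end

section
/- Let p ≡ 1 (mod 4) be a prime and b an integer. Then the set {N_p(a,b) : 1 < a < p, (a/p) = -1} has exactly one element. -/
/-!
If `{u} > {v}` then `{v - u} = {v} - {u} + p`, and otherwise `{v - u} = {v} - {u}`; summing over
`x` gives `p · N_p(a,b) = Σ {(a-1)x²} + Σ {x²+b} - Σ {ax²+b}`. Since `-1` is a square, `e x²` and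
`-e x²` run over the same residues, so for `a ≢ 1` the first sum is `p(p-1)/4`. The last sum
depends only on the square class of `a`, because `x ↦ ±r x` permutes `1, …, (p-1)/2`.
-/

open Finset

lemma ZMod.natCast_natAbs_valMinAbs_sq {n : ℕ} (a : ZMod n) :
    ((a.valMinAbs.natAbs : ℕ) : ZMod n) ^ 2 = a ^ 2 := by
  have h := congrArg (Int.cast : ℤ → ZMod n) (Int.natAbs_sq a.valMinAbs)
  rwa [Int.cast_pow, Int.cast_pow, Int.cast_natCast, ZMod.coe_valMinAbs] at h

lemma ZMod.natCast_val_sub {n : ℕ} [NeZero n] (u v : ZMod n) :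
    ((v - u).val : ℤ) = v.val - u.val + if v.val < u.val then (n : ℤ) else 0 := by
  have hn : (0 : ℤ) < n := by exact_mod_cast Nat.pos_of_neZero n
  have hu := u.val_lt
  have hv := v.val_lt
  have h : ((v - u).val : ℤ) = ((v.val : ℤ) - u.val) % n := by
    rw [← ZMod.val_intCast]; simp
  split_ifs with hlt
  · rw [h, ← Int.add_emod_right, Int.emod_eq_of_lt] <;> omega
  · rw [h, Int.emod_eq_of_lt] <;> omega

section

variable {p : ℕ} [Fact p.Prime]

lemma natCast_ne_zero_of_mem_Icc_half {x : ℕ} (hx : x ∈ Icc 1 (p / 2)) : (x : ZMod p) ≠ 0 := by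
  have hp := (Fact.out : p.Prime).two_le
  rw [mem_Icc] at hx
  rw [Ne, ZMod.natCast_eq_zero_iff]
  intro h
  have := Nat.le_of_dvd (by omega) h
  omega

-- `x ↦ |r x|` (least absolute residue) permutes `1, …, p/2`, as in Gauss's lemma.
lemma sum_Icc_half_comp_mul_sq {M : Type*} [AddCommMonoid M] {r : ZMod p} (hr : r ≠ 0)
    (g : ZMod p → M) :
    ∑ x ∈ Icc 1 (p / 2), g ((r * x) ^ 2) = ∑ x ∈ Icc 1 (p / 2), g ((x : ZMod p) ^ 2) := by
  have h := congrArg (fun s => (s.map fun x : ℕ => g ((x : ZMod p) ^ 2)).sum)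
    (ZMod.Ico_map_valMinAbs_natAbs_eq_Ico_map_id p r hr)
  simp only [Multiset.map_map, Function.comp_def, ZMod.natCast_natAbs_valMinAbs_sq] at h
  exact h

lemma two_mul_sum_val_mul_sq (hi : IsSquare (-1 : ZMod p)) {e : ZMod p} (he : e ≠ 0) :
    2 * ∑ x ∈ Icc 1 (p / 2), ((e * (x : ZMod p) ^ 2).val : ℤ) = p * (p / 2 : ℕ) := by
  obtain ⟨i, hi⟩ := hi
  have hi0 : i ≠ 0 := by rintro rfl; simp at hi
  have hneg : ∑ x ∈ Icc 1 (p / 2), ((-(e * (x : ZMod p) ^ 2)).val : ℤ) =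
      ∑ x ∈ Icc 1 (p / 2), ((e * (x : ZMod p) ^ 2).val : ℤ) := by
    refine Eq.trans ?_ (sum_Icc_half_comp_mul_sq hi0 fun y => ((e * y).val : ℤ))
    refine sum_congr rfl fun x _ => ?_
    rw [mul_pow, sq i, ← hi]
    ring_nf
  have hpair : ∀ x ∈ Icc 1 (p / 2),
      ((e * (x : ZMod p) ^ 2).val : ℤ) + ((-(e * (x : ZMod p) ^ 2)).val : ℤ) = p := by
    intro x hx
    have hne : e * (x : ZMod p) ^ 2 ≠ 0 :=
      mul_ne_zero he (pow_ne_zero 2 (natCast_ne_zero_of_mem_Icc_half hx))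
    have hlt := (e * (x : ZMod p) ^ 2).val_lt
    rw [ZMod.neg_val, if_neg hne]
    omega
  rw [two_mul]
  nth_rw 2 [← hneg]
  rw [← sum_add_distrib, sum_congr rfl hpair, sum_const, Nat.card_Icc, nsmul_eq_mul]
  push_cast
  ring

lemma natCast_mul_Np (a b : ℤ) :
    (p : ℤ) * Np p a b = ∑ x ∈ Icc 1 ((p - 1) / 2), ((((a : ZMod p) - 1) * x ^ 2).val : ℤ)
      + ∑ x ∈ Icc 1 ((p - 1) / 2), (((x : ZMod p) ^ 2 + b).val : ℤ)
      - ∑ x ∈ Icc 1 ((p - 1) / 2), (((a : ZMod p) * x ^ 2 + b).val : ℤ) := by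
  rw [← sum_add_distrib, ← sum_sub_distrib, Np, card_filter, Nat.cast_sum, mul_sum]
  refine sum_congr rfl fun x _ => ?_
  have h := ZMod.natCast_val_sub ((x : ZMod p) ^ 2 + (b : ZMod p))
    ((a : ZMod p) * (x : ZMod p) ^ 2 + (b : ZMod p))
  rw [show (a : ZMod p) * x ^ 2 + b - (x ^ 2 + b) = (a - 1) * x ^ 2 by ring] at h
  have hu : ((x : ℤ) ^ 2 + b) % p = (((x : ZMod p) ^ 2 + b).val : ℤ) := by
    rw [← ZMod.val_intCast]; push_cast; rfl
  have hv : (a * (x : ℤ) ^ 2 + b) % p = (((a : ZMod p) * x ^ 2 + b).val : ℤ) := by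
    rw [← ZMod.val_intCast]; push_cast; rfl
  rw [hu, hv]
  split_ifs at h ⊢ <;> push_cast <;> omega

lemma Np_eq_of_eq_sq_mul (hp4 : p % 4 = 1) (b : ℤ) {a₁ a₂ : ℤ} {r : ZMod p} (hr : r ≠ 0)
    (ha : (a₂ : ZMod p) = r ^ 2 * a₁) (h₁ : (a₁ : ZMod p) ≠ 1) (h₂ : (a₂ : ZMod p) ≠ 1) :
    Np p a₁ b = Np p a₂ b := by
  have hi : IsSquare (-1 : ZMod p) := ZMod.exists_sq_eq_neg_one_iff.2 (by omega)
  have hhalf : (p - 1) / 2 = p / 2 := by omega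
  have hA₁ := two_mul_sum_val_mul_sq hi (sub_ne_zero.2 h₁)
  have hA₂ := two_mul_sum_val_mul_sq hi (sub_ne_zero.2 h₂)
  have hB : ∑ x ∈ Icc 1 (p / 2), (((a₁ : ZMod p) * x ^ 2 + b).val : ℤ) =
      ∑ x ∈ Icc 1 (p / 2), (((a₂ : ZMod p) * x ^ 2 + b).val : ℤ) := by
    rw [← sum_Icc_half_comp_mul_sq hr fun y => (((a₁ : ZMod p) * y + b).val : ℤ), ha]
    exact sum_congr rfl fun x _ => by ring_nf
  have h := natCast_mul_Np (p := p) a₁ b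
  have h' := natCast_mul_Np (p := p) a₂ b
  rw [hhalf] at h h'
  have hp0 : (p : ℤ) ≠ 0 := by exact_mod_cast (Fact.out : p.Prime).ne_zero
  exact_mod_cast mul_left_cancel₀ hp0 (by omega : (p : ℤ) * Np p a₁ b = p * Np p a₂ b)

lemma Np_eq_of_legendreSym_eq_neg_one (hp4 : p % 4 = 1) (b : ℤ) {a₁ a₂ : ℤ}
    (h₁ : legendreSym p a₁ = -1) (h₂ : legendreSym p a₂ = -1) : Np p a₁ b = Np p a₂ b := by
  have n₁ := (legendreSym.eq_neg_one_iff p).1 h₁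
  have n₂ := (legendreSym.eq_neg_one_iff p).1 h₂
  have ha₁ : (a₁ : ZMod p) ≠ 0 := fun h => n₁ (h ▸ IsSquare.zero)
  have ha₂ : (a₂ : ZMod p) ≠ 0 := fun h => n₂ (h ▸ IsSquare.zero)
  obtain ⟨s, hs⟩ : IsSquare ((a₁ * a₂ : ℤ) : ZMod p) := by
    rw [← legendreSym.eq_one_iff p (by push_cast; exact mul_ne_zero ha₁ ha₂), legendreSym.mul,
      h₁, h₂]
    norm_num
  push_cast at hs
  have hs0 : s ≠ 0 := by
    rintro rfl
    exact mul_ne_zero ha₁ ha₂ (by simpa using hs)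
  refine Np_eq_of_eq_sq_mul hp4 b (div_ne_zero hs0 ha₁) ?_ (fun h => n₁ (h ▸ IsSquare.one))
    (fun h => n₂ (h ▸ IsSquare.one))
  field_simp
  linear_combination hs

lemma exists_mem_Ioo_legendreSym_eq_neg_one (hp : p ≠ 2) :
    ∃ a ∈ Ioo (1 : ℤ) p, legendreSym p a = -1 := by
  obtain ⟨c, hc⟩ := FiniteField.exists_nonsquare (F := ZMod p) (by rwa [ZMod.ringChar_zmod_n])
  have hc0 : c.val ≠ 0 := fun h => hc (((ZMod.val_eq_zero c).1 h) ▸ IsSquare.zero)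
  have hc1 : c.val ≠ 1 := fun h =>
    hc ((ZMod.val_eq_one (Fact.out : p.Prime).one_lt c).1 h ▸ IsSquare.one)
  refine ⟨c.val, mem_Ioo.2 ⟨by omega, by exact_mod_cast c.val_lt⟩, ?_⟩
  rw [legendreSym.eq_neg_one_iff, Int.cast_natCast, ZMod.natCast_zmod_val]
  exact hc

end

theorem stmt_13 (p : ℕ) [Fact p.Prime] (hp4 : p % 4 = 1) (b : ℤ) :
    (((Finset.Ioo (1 : ℤ) (p : ℤ)).filter (fun a => legendreSym p a = -1)).image
      (fun a => Np p a b)).card = 1 := by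
  obtain ⟨a₀, ha₀, hl₀⟩ := exists_mem_Ioo_legendreSym_eq_neg_one (p := p) (by omega)
  rw [card_eq_one]
  refine ⟨Np p a₀ b, eq_singleton_iff_unique_mem.2
    ⟨mem_image_of_mem _ (mem_filter.2 ⟨ha₀, hl₀⟩), ?_⟩⟩
  simp only [mem_image, mem_filter]
  rintro _ ⟨a, ⟨-, hl⟩, rfl⟩
  exact Np_eq_of_legendreSym_eq_neg_one hp4 b hl hl₀
end

section
/- Let p > 3 be a prime and b an integer. Then the set {N_p(a,b) : 1 < a < p, (a/p) = 1} has exactly (3 - (-1/p))/2 elements, i.e., one element if p ≡ 1 (mod 4) and two elements if p ≡ 3 (mod 4); moreover this set does not depend on b. -/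
open Finset

theorem ZMod.intCast_val_sub {n : ℕ} [NeZero n] (u v : ZMod n) :
    ((u - v).val : ℤ) = u.val - v.val + if u.val < v.val then (n : ℤ) else 0 := by
  have hu := u.val_lt
  have hv := v.val_lt
  have hmod : ((u - v).val : ℤ) = ((u.val : ℤ) - v.val) % n := by
    rw [← ZMod.val_intCast]; push_cast; simp
  rw [hmod]
  split_ifs with h
  · rw [← Int.add_emod_right, Int.emod_eq_of_lt] <;> omega
  · rw [Int.emod_eq_of_lt] <;> omega

theorem quadraticChar_inv {F : Type*} [Field F] [Fintype F] [DecidableEq F] (a : F) :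
    quadraticChar F a⁻¹ = quadraticChar F a := by
  rw [← MulChar.inv_apply', (quadraticChar_isQuadratic F).inv]

theorem ne_zero_of_quadraticChar_eq_one {F : Type*} [Field F] [Fintype F] [DecidableEq F] {z : F}
    (h : quadraticChar F z = 1) : z ≠ 0 := by
  rintro rfl
  simp at h

variable {p : ℕ} [Fact p.Prime]

variable (p) in
def nonzeroSquares : Finset (ZMod p) :=
  univ.filter fun z => quadraticChar (ZMod p) z = 1

theorem mem_nonzeroSquares {z : ZMod p} :
    z ∈ nonzeroSquares p ↔ quadraticChar (ZMod p) z = 1 := by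
  simp [nonzeroSquares]

theorem injOn_natCast_sq_Icc :
    Set.InjOn (fun x : ℕ => (x : ZMod p) ^ 2) (Icc 1 ((p - 1) / 2)) := by
  intro x hx y hy hxy
  simp only [coe_Icc, Set.mem_Icc] at hx hy
  have hp := (Fact.out : p.Prime).two_le
  rcases sq_eq_sq_iff_eq_or_eq_neg.1 hxy with h | h
  · rw [ZMod.natCast_eq_natCast_iff', Nat.mod_eq_of_lt (by omega),
      Nat.mod_eq_of_lt (by omega)] at h
    exact h
  · have : ((x + y : ℕ) : ZMod p) = 0 := by push_cast; rw [h]; ring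
    have := Nat.le_of_dvd (by omega) ((ZMod.natCast_eq_zero_iff _ _).1 this)
    omega

theorem image_natCast_sq_Icc (hp : p ≠ 2) :
    (Icc 1 ((p - 1) / 2)).image (fun x : ℕ => (x : ZMod p) ^ 2) = nonzeroSquares p := by
  ext z
  simp only [mem_image, mem_Icc, mem_nonzeroSquares]
  constructor
  · rintro ⟨x, ⟨hx1, hx2⟩, rfl⟩
    apply quadraticChar_sq_one'
    rw [Ne, ZMod.natCast_eq_zero_iff]
    exact fun h => by have := Nat.le_of_dvd (by omega) h; omega
  · intro hz
    obtain ⟨c, rfl⟩ := (quadraticChar_one_iff_isSquare (ne_zero_of_quadraticChar_eq_one hz)).1 hz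
    have hc : c ≠ 0 := by rintro rfl; simp at hz
    refine ⟨c.valMinAbs.natAbs, ⟨?_, ?_⟩, ?_⟩
    · rw [Nat.one_le_iff_ne_zero, Ne, Int.natAbs_eq_zero, ZMod.valMinAbs_eq_zero]
      exact hc
    · have := c.natAbs_valMinAbs_le
      have := (Fact.out : p.Prime).eq_two_or_odd
      omega
    · rw [ZMod.natCast_natAbs_valMinAbs]
      split_ifs <;> ring

theorem card_nonzeroSquares (hp : p ≠ 2) : #(nonzeroSquares p) = (p - 1) / 2 := by
  rw [← image_natCast_sq_Icc hp, card_image_of_injOn injOn_natCast_sq_Icc, Nat.card_Icc]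
  omega

theorem card_filter_Icc_natCast_sq (hp : p ≠ 2) (P : ZMod p → Prop) [DecidablePred P] :
    #{x ∈ Icc 1 ((p - 1) / 2) | P (((x : ℕ) : ZMod p) ^ 2)} = #{z ∈ nonzeroSquares p | P z} := by
  rw [← image_natCast_sq_Icc hp, filter_image,
    card_image_of_injOn (injOn_natCast_sq_Icc.mono (coe_subset.2 (filter_subset _ _)))]

theorem sum_nonzeroSquares_comp_mul_left {M : Type*} [AddCommMonoid M] {α : ZMod p}
    (hα : quadraticChar (ZMod p) α = 1) (f : ZMod p → M) :
    ∑ z ∈ nonzeroSquares p, f (α * z) = ∑ z ∈ nonzeroSquares p, f z := by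
  have hα0 := ne_zero_of_quadraticChar_eq_one hα
  refine sum_nbij' (α * ·) (α⁻¹ * ·) ?_ ?_ ?_ ?_ fun _ _ => rfl
  · intro z hz
    simp only [mem_nonzeroSquares, map_mul] at hz ⊢
    rw [hα, hz, one_mul]
  · intro z hz
    simp only [mem_nonzeroSquares, map_mul, quadraticChar_inv] at hz ⊢
    rw [hα, hz, one_mul]
  · intro z _
    exact inv_mul_cancel_left₀ hα0 z
  · intro z _
    exact mul_inv_cancel_left₀ hα0 z

def squareValSum (γ : ZMod p) : ℤ :=
  ∑ z ∈ nonzeroSquares p, ((γ * z).val : ℤ)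

theorem squareValSum_mul_left {α : ZMod p} (hα : quadraticChar (ZMod p) α = 1) (γ : ZMod p) :
    squareValSum (α * γ) = squareValSum γ := by
  unfold squareValSum
  conv_rhs => rw [← sum_nonzeroSquares_comp_mul_left hα]
  exact sum_congr rfl fun z _ => by rw [mul_assoc, mul_left_comm]

theorem squareValSum_eq_of_quadraticChar_eq {γ δ : ZMod p} (hδ : δ ≠ 0)
    (h : quadraticChar (ZMod p) γ = quadraticChar (ZMod p) δ) :
    squareValSum γ = squareValSum δ := by
  have hquot : quadraticChar (ZMod p) (γ * δ⁻¹) = 1 := by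
    rw [map_mul, quadraticChar_inv, h, ← sq, quadraticChar_sq_one hδ]
  rw [← squareValSum_mul_left hquot δ, inv_mul_cancel_right₀ hδ]

theorem squareValSum_add_squareValSum_neg (hp : p ≠ 2) {γ : ZMod p} (hγ : γ ≠ 0) :
    squareValSum γ + squareValSum (-γ) = p * ((p - 1) / 2 : ℕ) := by
  rw [squareValSum, squareValSum, ← sum_add_distrib, ← card_nonzeroSquares hp, mul_comm,
    ← nsmul_eq_mul, ← sum_const]
  refine sum_congr rfl fun z hz => ?_
  have hγz : γ * z ≠ 0 :=
    mul_ne_zero hγ (ne_zero_of_quadraticChar_eq_one (mem_nonzeroSquares.1 hz))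
  rw [neg_mul, ZMod.neg_val, if_neg hγz, Nat.cast_sub (γ * z).val_lt.le]
  ring

theorem squareValSum_neg_of_mod_four_eq_one (h4 : p % 4 = 1) (γ : ZMod p) :
    squareValSum (-γ) = squareValSum γ := by
  have hneg : quadraticChar (ZMod p) (-1) = 1 :=
    (quadraticChar_one_iff_isSquare (neg_ne_zero.2 one_ne_zero)).2
      (ZMod.exists_sq_eq_neg_one_iff.2 (by omega))
  rw [neg_eq_neg_one_mul, squareValSum_mul_left hneg]

theorem quadraticChar_neg_of_mod_four_eq_three (h4 : p % 4 = 3) (γ : ZMod p) :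
    quadraticChar (ZMod p) (-γ) = -quadraticChar (ZMod p) γ := by
  have hneg : quadraticChar (ZMod p) (-1) = -1 :=
    quadraticChar_neg_one_iff_not_isSquare.2 (mt ZMod.exists_sq_eq_neg_one_iff.1 (by omega))
  rw [neg_eq_neg_one_mul, map_mul, hneg, neg_one_mul]

theorem squareValSum_eq_squareValSum_iff (hp : p ≠ 2) {γ δ : ZMod p} (hγ : γ ≠ 0) (hδ : δ ≠ 0) :
    squareValSum γ = squareValSum δ ↔
      quadraticChar (ZMod p) γ = quadraticChar (ZMod p) δ ∨ p % 4 = 1 := by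
  have hγsum := squareValSum_add_squareValSum_neg hp hγ
  rcases Nat.odd_mod_four_iff.1 (Nat.odd_iff.1 ((Fact.out : p.Prime).odd_of_ne_two hp)) with
    h4 | h4
  · have hδsum := squareValSum_add_squareValSum_neg hp hδ
    rw [squareValSum_neg_of_mod_four_eq_one h4] at hγsum hδsum
    simp only [h4, or_true, iff_true]
    linarith
  · simp only [h4, OfNat.ofNat_ne_one, or_false]
    refine ⟨fun h => ?_, squareValSum_eq_of_quadraticChar_eq hδ⟩
    by_contra hne
    have hδneg : quadraticChar (ZMod p) δ = quadraticChar (ZMod p) (-γ) := by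
      rw [quadraticChar_neg_of_mod_four_eq_three h4]
      rcases quadraticChar_dichotomy hγ with h1 | h1 <;>
        rcases quadraticChar_dichotomy hδ with h2 | h2 <;> simp_all
    rw [← squareValSum_eq_of_quadraticChar_eq (neg_ne_zero.2 hγ) hδneg, ← h] at hγsum
    have hprod : Odd ((p : ℤ) * ((p - 1) / 2 : ℕ)) :=
      (Int.odd_coe_nat p).2 (Nat.odd_iff.2 (by omega)) |>.mul
        ((Int.odd_coe_nat _).2 (Nat.odd_iff.2 (by omega)))
    rw [← hγsum] at hprod
    exact Int.not_even_iff_odd.2 hprod ⟨_, rfl⟩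

theorem natCast_mul_Np_eq_squareValSum (hp : p ≠ 2) {a : ℤ}
    (ha : quadraticChar (ZMod p) (a : ZMod p) = 1) (b : ℤ) :
    (p : ℤ) * Np p a b = squareValSum ((a : ZMod p) - 1) := by
  set α : ZMod p := (a : ZMod p)
  set β : ZMod p := (b : ZMod p)
  have hNp : Np p a b = #{z ∈ nonzeroSquares p | (α * z + β).val < (z + β).val} := by
    rw [Np, ← card_filter_Icc_natCast_sq hp]
    refine congrArg card (filter_congr fun x _ => ?_)
    rw [gt_iff_lt, ← ZMod.val_intCast, ← ZMod.val_intCast, Nat.cast_lt]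
    push_cast
    rfl
  have hterm : ∀ z : ZMod p, (if (α * z + β).val < (z + β).val then (p : ℤ) else 0) =
      (((α - 1) * z).val : ℤ) - (α * z + β).val + (z + β).val := by
    intro z
    have := ZMod.intCast_val_sub (α * z + β) (z + β)
    rw [show α * z + β - (z + β) = (α - 1) * z by ring] at this
    linarith
  calc (p : ℤ) * Np p a b
      = ∑ z ∈ nonzeroSquares p, if (α * z + β).val < (z + β).val then (p : ℤ) else 0 := by
        rw [hNp, natCast_card_filter, mul_sum]
        simp only [mul_ite, mul_one, mul_zero]
    _ = ∑ z ∈ nonzeroSquares p,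
          ((((α - 1) * z).val : ℤ) - (α * z + β).val + (z + β).val) :=
        sum_congr rfl fun z _ => hterm z
    _ = squareValSum (α - 1) := by
        rw [sum_add_distrib, sum_sub_distrib,
          sum_nonzeroSquares_comp_mul_left ha fun z => ((z + β).val : ℤ), sub_add_cancel]
        rfl

theorem intCast_sub_one_ne_zero {a : ℤ} (ha : a ∈ Ioo (1 : ℤ) p) : (a : ZMod p) - 1 ≠ 0 := by
  rw [mem_Ioo] at ha
  rw [← Int.cast_one, ← Int.cast_sub, Ne, ZMod.intCast_zmod_eq_zero_iff_dvd]
  exact fun h => by have := Int.le_of_dvd (by omega) h; omega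

theorem Np_eq_Np_iff (hp : p ≠ 2) {a a' : ℤ}
    (ha : a ∈ {a ∈ Ioo (1 : ℤ) p | legendreSym p a = 1})
    (ha' : a' ∈ {a ∈ Ioo (1 : ℤ) p | legendreSym p a = 1}) (b b' : ℤ) :
    Np p a b = Np p a' b' ↔
      quadraticChar (ZMod p) ((a : ZMod p) - 1) = quadraticChar (ZMod p) ((a' : ZMod p) - 1) ∨
        p % 4 = 1 := by
  rw [mem_filter] at ha ha'
  rw [← squareValSum_eq_squareValSum_iff hp (intCast_sub_one_ne_zero ha.1)
      (intCast_sub_one_ne_zero ha'.1), ← natCast_mul_Np_eq_squareValSum hp ha.2 b,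
    ← natCast_mul_Np_eq_squareValSum hp ha'.2 b',
    mul_right_inj' (by exact_mod_cast (Fact.out : p.Prime).ne_zero), Nat.cast_inj]

theorem intCast_val_mem_filter_legendreSym {z : ZMod p} (hz1 : z ≠ 1)
    (hz : quadraticChar (ZMod p) z = 1) :
    (z.val : ℤ) ∈ {a ∈ Ioo (1 : ℤ) p | legendreSym p a = 1} := by
  have hcast : ((z.val : ℤ) : ZMod p) = z := by simp
  have h0 : z.val ≠ 0 := (ZMod.val_ne_zero z).2 (ne_zero_of_quadraticChar_eq_one hz)
  have h1 : z.val ≠ 1 := fun h => hz1 (by rw [← ZMod.natCast_zmod_val z, h, Nat.cast_one])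
  rw [mem_filter, mem_Ioo, legendreSym, hcast]
  exact ⟨⟨by omega, by exact_mod_cast z.val_lt⟩, hz⟩

theorem quadraticChar_four (hp : p ≠ 2) : quadraticChar (ZMod p) 4 = 1 := by
  rw [show (4 : ZMod p) = 2 ^ 2 by norm_num]
  exact quadraticChar_sq_one' (Ring.two_ne_zero (by rwa [ZMod.ringChar_zmod_n]))

theorem four_ne_one (hp3 : 3 < p) : (4 : ZMod p) ≠ 1 := by
  intro h
  have h3 : ((3 : ℕ) : ZMod p) = 0 := by push_cast; linear_combination h
  have := Nat.le_of_dvd (by norm_num) ((ZMod.natCast_eq_zero_iff _ _).1 h3)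
  omega

theorem quadraticChar_inv_sub_one (h4 : p % 4 = 3) {z : ZMod p}
    (hz : quadraticChar (ZMod p) z = 1) :
    quadraticChar (ZMod p) (z⁻¹ - 1) = -quadraticChar (ZMod p) (z - 1) := by
  have hz0 := ne_zero_of_quadraticChar_eq_one hz
  rw [show z⁻¹ - 1 = -((z - 1) * z⁻¹) by field_simp; ring,
    quadraticChar_neg_of_mod_four_eq_three h4, map_mul, quadraticChar_inv, hz, mul_one]

theorem card_image_Np_of_mod_four_eq_one (hp3 : 3 < p) (h4 : p % 4 = 1) (b : ℤ) :
    #({a ∈ Ioo (1 : ℤ) p | legendreSym p a = 1}.image fun a => Np p a b) = 1 := by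
  have hp : p ≠ 2 := by omega
  have h₁ := intCast_val_mem_filter_legendreSym (four_ne_one hp3) (quadraticChar_four hp)
  refine le_antisymm (card_le_one.2 ?_) (card_pos.2 ⟨_, mem_image_of_mem _ h₁⟩)
  simp only [mem_image]
  rintro _ ⟨a, ha, rfl⟩ _ ⟨a', ha', rfl⟩
  exact (Np_eq_Np_iff hp ha ha' b b).2 (Or.inr h4)

theorem card_image_Np_of_mod_four_eq_three (hp3 : 3 < p) (h4 : p % 4 = 3) (b : ℤ) :
    #({a ∈ Ioo (1 : ℤ) p | legendreSym p a = 1}.image fun a => Np p a b) = 2 := by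
  have hp : p ≠ 2 := by omega
  have h₁ := intCast_val_mem_filter_legendreSym (four_ne_one hp3) (quadraticChar_four hp)
  have h₂ := intCast_val_mem_filter_legendreSym (z := (4 : ZMod p)⁻¹)
    (by rw [Ne, inv_eq_one]; exact four_ne_one hp3)
    (by rw [quadraticChar_inv]; exact quadraticChar_four hp)
  have hε : quadraticChar (ZMod p) (4 - 1) ≠ 0 :=
    quadraticChar_eq_zero_iff.not.2 (sub_ne_zero.2 (four_ne_one hp3))
  have hε₂ := quadraticChar_inv_sub_one h4 (quadraticChar_four hp)
  have h3 : p % 4 ≠ 1 := by omega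
  rw [card_eq_two]
  refine ⟨Np p ((4 : ZMod p).val) b, Np p ((4 : ZMod p)⁻¹.val) b, ?_, ext fun n => ?_⟩
  · rw [Ne, Np_eq_Np_iff hp h₁ h₂]
    simp only [Int.cast_natCast, ZMod.natCast_zmod_val, hε₂, h3, or_false]
    exact fun h => hε (by linarith)
  · simp only [mem_image, mem_insert, mem_singleton]
    constructor
    · rintro ⟨a, ha, rfl⟩
      rw [Np_eq_Np_iff hp ha h₁, Np_eq_Np_iff hp ha h₂]
      simp only [Int.cast_natCast, ZMod.natCast_zmod_val, hε₂, h3, or_false]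
      rcases quadraticChar_dichotomy (intCast_sub_one_ne_zero (mem_filter.1 ha).1) with h | h <;>
        rcases quadraticChar_dichotomy (sub_ne_zero.2 (four_ne_one hp3)) with h' | h' <;>
        simp [h, h']
    · rintro (rfl | rfl)
      exacts [⟨_, h₁, rfl⟩, ⟨_, h₂, rfl⟩]

theorem stmt_16 (p : ℕ) [Fact p.Prime] (hp3 : 3 < p) (b : ℤ) :
    ((((Finset.Ioo (1 : ℤ) (p : ℤ)).filter (fun a => legendreSym p a = 1)).image
      (fun a => Np p a b)).card : ℤ) = (3 - legendreSym p (-1)) / 2 ∧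
    ∀ b' : ℤ,
      ((Finset.Ioo (1 : ℤ) (p : ℤ)).filter (fun a => legendreSym p a = 1)).image
        (fun a => Np p a b')
      = ((Finset.Ioo (1 : ℤ) (p : ℤ)).filter (fun a => legendreSym p a = 1)).image
        (fun a => Np p a b) := by
  have hp : p ≠ 2 := by omega
  refine ⟨?_, fun b' => image_congr fun a ha => (Np_eq_Np_iff hp ha ha b' b).2 (Or.inl rfl)⟩
  rw [legendreSym.at_neg_one hp]
  rcases Nat.odd_mod_four_iff.1 (Nat.odd_iff.1 ((Fact.out : p.Prime).odd_of_ne_two hp)) with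
    h4 | h4
  · rw [card_image_Np_of_mod_four_eq_one hp3 h4, ZMod.χ₄_nat_one_mod_four h4]
    norm_num
  · rw [card_image_Np_of_mod_four_eq_three hp3 h4, ZMod.χ₄_nat_three_mod_four h4]
    norm_num
end

section
/- Let p be an odd prime and let a, b be integers with 2 ≤ a ≤ p-1. Then N_p(a,b) = (p-1)/2 + Σ_{x: (x/p)=1} {(x+b)/p} - Σ_{y: (y/p)=(a/p)} {(y+b)/p} - Σ_{z: (z/p)=((1-a)/p)} z/p, where all sums range over residues in {1, ..., p-1} with the indicated Legendre symbol value. -/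
theorem Int.fract_sub_eq_fract_sub_fract_add_ite {K : Type*} [Field K] [LinearOrder K]
    [IsOrderedRing K] [FloorRing K] (x y : K) :
    Int.fract (x - y) = Int.fract x - Int.fract y + if Int.fract x < Int.fract y then 1 else 0 := by
  have hx := Int.fract_nonneg x
  have hx' := Int.fract_lt_one x
  have hy := Int.fract_nonneg y
  have hy' := Int.fract_lt_one y
  rw [Int.fract_eq_iff]
  split_ifs with h
  · refine ⟨by linarith, by linarith, ⌊x⌋ - ⌊y⌋ - 1, ?_⟩
    unfold Int.fract; push_cast; ring
  · refine ⟨by linarith, by linarith, ⌊x⌋ - ⌊y⌋, ?_⟩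
    unfold Int.fract; push_cast; ring

theorem Int.fract_emod_add_div {K : Type*} [Field K] [LinearOrder K] [IsOrderedRing K]
    [FloorRing K] (m b : ℤ) (n : ℕ) :
    Int.fract (((m % n + b : ℤ) : K) / n) = Int.fract (((m + b : ℤ) : K) / n) := by
  rw [Int.fract_div_intCast_eq_div_intCast_mod, Int.fract_div_intCast_eq_div_intCast_mod,
    Int.emod_add_emod]

theorem Nat.cast_sub_one_div_two_of_odd {K : Type*} [Field K] [NeZero (2 : K)] {n : ℕ}
    (hn : Odd n) : (((n - 1) / 2 : ℕ) : K) = ((n : K) - 1) / 2 := by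
  obtain ⟨k, rfl⟩ := hn
  rw [Nat.add_sub_cancel, Nat.mul_div_cancel_left k two_pos]
  push_cast
  field_simp
  ring

theorem Int.emod_mem_Icc_iff {n : ℕ} (hn : 0 < n) (m : ℤ) :
    m % n ∈ Finset.Icc 1 ((n : ℤ) - 1) ↔ (m : ZMod n) ≠ 0 := by
  have h0 := Int.emod_nonneg m (by omega : (n : ℤ) ≠ 0)
  have hlt := Int.emod_lt_of_pos m (by omega : (0 : ℤ) < n)
  rw [Finset.mem_Icc, Ne, ZMod.intCast_zmod_eq_zero_iff_dvd, Int.dvd_iff_emod_eq_zero]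
  omega

theorem ite_emod_lt_emod_eq_fract {n : ℕ} (hn : 0 < n) {u v : ℤ}
    (huv : ((u - v : ℤ) : ZMod n) ≠ 0) :
    (if v % n < u % n then (1 : ℝ) else 0)
      = Int.fract ((u : ℝ) / n) - Int.fract ((v : ℝ) / n) + 1
        - Int.fract (((u - v : ℤ) : ℝ) / n) := by
  have hn' : (0 : ℝ) < n := by exact_mod_cast hn
  have hlt : v % n < u % n ↔ Int.fract ((v : ℝ) / n) < Int.fract ((u : ℝ) / n) := by
    rw [Int.fract_div_intCast_eq_div_intCast_mod, Int.fract_div_intCast_eq_div_intCast_mod,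
      div_lt_div_iff_of_pos_right hn', Int.cast_lt]
  have hfract : Int.fract (((u - v : ℤ) : ℝ) / n) ≠ 0 := by
    have := (Int.emod_mem_Icc_iff hn _).mpr huv
    rw [Finset.mem_Icc] at this
    rw [Int.fract_div_intCast_eq_div_intCast_mod, div_ne_zero_iff, Int.cast_ne_zero]
    exact ⟨by omega, hn'.ne'⟩
  have hsub := Int.fract_sub_eq_fract_sub_fract_add_ite ((v : ℝ) / n) ((u : ℝ) / n)
  rw [← sub_div, show (v : ℝ) - u = -((u - v : ℤ) : ℝ) by push_cast; ring, neg_div,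
    Int.fract_neg hfract] at hsub
  simp only [hlt]
  linarith

theorem ZMod.intCast_ne_zero_of_pos_of_lt {n : ℕ} {m : ℤ} (h0 : 0 < m) (hm : m < n) :
    (m : ZMod n) ≠ 0 := by
  rw [Ne, ZMod.intCast_zmod_eq_zero_iff_dvd]
  exact fun hdvd => (Int.le_of_dvd h0 hdvd).not_gt hm

theorem ZMod.natCast_natAbs_valMinAbs_sq_s17 {n : ℕ} [NeZero n] (w : ZMod n) :
    ((w.valMinAbs.natAbs : ℕ) : ZMod n) ^ 2 = w ^ 2 := by
  rw [ZMod.natCast_natAbs_valMinAbs]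
  split_ifs <;> simp only [neg_sq]

theorem ZMod.natCast_sq_injOn_Iic_half (p : ℕ) [Fact p.Prime] :
    Set.InjOn (fun x : ℕ => (x : ZMod p) ^ 2) (Set.Iic (p / 2)) := by
  intro x hx y hy hxy
  have h := (ZMod.natAbs_valMinAbs_eq_natAbs_valMinAbs (a := (x : ZMod p)) (b := y)).mpr
    (sq_eq_sq_iff_eq_or_eq_neg.mp hxy)
  rwa [ZMod.valMinAbs_natCast_of_le_half hx, ZMod.valMinAbs_natCast_of_le_half hy,
    Int.natAbs_natCast, Int.natAbs_natCast] at h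

theorem legendreSym.exists_eq_mul_sq_of_eq (p : ℕ) [Fact p.Prime] {c y : ℤ}
    (hc : (c : ZMod p) ≠ 0) (hy : legendreSym p y = legendreSym p c) :
    ∃ w : ZMod p, (y : ZMod p) = c * w ^ 2 := by
  have hsq : legendreSym p (y * c) = 1 := by
    rw [legendreSym.mul, hy]
    rcases legendreSym.eq_one_or_neg_one p hc with h | h <;> rw [h] <;> norm_num
  have hy0 : (y : ZMod p) ≠ 0 := by
    rwa [Ne, ← legendreSym.eq_zero_iff, hy, legendreSym.eq_zero_iff]
  obtain ⟨z, hz⟩ := (legendreSym.eq_one_iff p (by push_cast; exact mul_ne_zero hy0 hc)).mp hsq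
  refine ⟨z / c, ?_⟩
  push_cast at hz
  field_simp
  linear_combination hz

theorem legendreSym.sum_filter_eq_sum_mul_sq {M : Type*} [AddCommMonoid M] (p : ℕ) [Fact p.Prime]
    (hodd : Odd p) {c : ℤ} (hc : (c : ZMod p) ≠ 0) (f : ℤ → M) :
    ∑ y ∈ (Finset.Icc (1 : ℤ) (p - 1)).filter (fun y => legendreSym p y = legendreSym p c), f y
      = ∑ x ∈ Finset.Icc 1 ((p - 1) / 2), f (c * (x : ℤ) ^ 2 % p) := by
  have hp : 0 < p := (Fact.out : p.Prime).pos
  have hhalf : (p - 1) / 2 = p / 2 := by obtain ⟨k, rfl⟩ := hodd; omega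
  have hx0 : ∀ x ∈ Finset.Icc 1 ((p - 1) / 2), ((x : ℤ) : ZMod p) ≠ 0 := fun x hx => by
    rw [Finset.mem_Icc] at hx
    exact ZMod.intCast_ne_zero_of_pos_of_lt (by omega) (by omega)
  refine (Finset.sum_nbij (fun x : ℕ => c * (x : ℤ) ^ 2 % p) ?_ ?_ ?_ fun _ _ => rfl).symm
  · intro x hx
    have hcx : ((c * (x : ℤ) ^ 2 : ℤ) : ZMod p) ≠ 0 := by
      push_cast
      exact mul_ne_zero hc (pow_ne_zero _ (by exact_mod_cast hx0 x hx))
    refine Finset.mem_filter.mpr ⟨(Int.emod_mem_Icc_iff hp _).mpr hcx, ?_⟩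
    rw [← legendreSym.mod, legendreSym.mul, legendreSym.sq_one' p (hx0 x hx), mul_one]
  · intro x hx y hy hxy
    refine ZMod.natCast_sq_injOn_Iic_half p ?_ ?_ (mul_left_cancel₀ hc ?_)
    · exact (Finset.mem_Icc.mp hx).2.trans hhalf.le
    · exact (Finset.mem_Icc.mp hy).2.trans hhalf.le
    · have := (ZMod.intCast_eq_intCast_iff' _ _ p).mpr hxy
      push_cast at this
      exact this
  · intro y hy
    obtain ⟨hyI, hyc⟩ := Finset.mem_filter.mp (Finset.mem_coe.mp hy)
    rw [Finset.mem_Icc] at hyI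
    obtain ⟨w, hw⟩ := legendreSym.exists_eq_mul_sq_of_eq p hc hyc
    have hw0 : w ≠ 0 := by
      rintro rfl
      exact ZMod.intCast_ne_zero_of_pos_of_lt (by omega) (by omega) (hw.trans (by ring))
    refine ⟨w.valMinAbs.natAbs, Finset.mem_Icc.mpr ⟨?_, hhalf ▸ ZMod.natAbs_valMinAbs_le w⟩, ?_⟩
    · rwa [Nat.one_le_iff_ne_zero, Int.natAbs_ne_zero, Ne, ZMod.valMinAbs_eq_zero]
    · rw [← Int.emod_eq_of_lt (by omega) (by omega : y < p), ← ZMod.intCast_eq_intCast_iff',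
        Int.cast_mul, Int.cast_pow, Int.cast_natCast, ZMod.natCast_natAbs_valMinAbs_sq_s17, hw]

theorem stmt_17 (p : ℕ) [Fact p.Prime] (hodd : Odd p) (a b : ℤ)
    (ha : 2 ≤ a) (ha' : a ≤ (p : ℤ) - 1) :
    (Np p a b : ℝ) = ((p : ℝ) - 1) / 2
      + (∑ x ∈ (Finset.Icc (1 : ℤ) ((p : ℤ) - 1)).filter
          (fun x => legendreSym p x = 1), Int.fract (((x + b : ℤ) : ℝ) / p))
      - (∑ y ∈ (Finset.Icc (1 : ℤ) ((p : ℤ) - 1)).filter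
          (fun y => legendreSym p y = legendreSym p a),
            Int.fract (((y + b : ℤ) : ℝ) / p))
      - (∑ z ∈ (Finset.Icc (1 : ℤ) ((p : ℤ) - 1)).filter
          (fun z => legendreSym p z = legendreSym p (1 - a)), (z : ℝ) / p) := by
  have hp : 0 < p := (Fact.out : p.Prime).pos
  have ha0 : (a : ZMod p) ≠ 0 := ZMod.intCast_ne_zero_of_pos_of_lt (by omega) (by omega)
  have ha1 : ((1 - a : ℤ) : ZMod p) ≠ 0 := by
    rw [show 1 - a = -(a - 1) by ring, Int.cast_neg, neg_ne_zero]
    exact ZMod.intCast_ne_zero_of_pos_of_lt (by omega) (by omega)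
  set g : ℤ → ℝ := fun y => Int.fract (((y + b : ℤ) : ℝ) / p)
  have hNp : (Np p a b : ℝ) = ∑ x ∈ Finset.Icc 1 ((p - 1) / 2),
      (g (1 * (x : ℤ) ^ 2 % p) - g (a * (x : ℤ) ^ 2 % p) + 1
        - (((1 - a) * (x : ℤ) ^ 2 % p : ℤ) : ℝ) / p) := by
    rw [Np, Finset.card_filter, Nat.cast_sum]
    refine Finset.sum_congr rfl fun x hx => ?_
    have hx0 : ((x : ℤ) : ZMod p) ≠ 0 := by
      rw [Finset.mem_Icc] at hx
      exact ZMod.intCast_ne_zero_of_pos_of_lt (by omega) (by omega)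
    have huv : ((x : ℤ) ^ 2 + b) - (a * (x : ℤ) ^ 2 + b) = (1 - a) * (x : ℤ) ^ 2 := by ring
    rw [Nat.cast_ite, Nat.cast_one, Nat.cast_zero, ite_emod_lt_emod_eq_fract hp, huv,
      ← Int.fract_div_intCast_eq_div_intCast_mod]
    · simp only [g, Int.fract_emod_add_div, one_mul]
    · rw [huv]
      push_cast
      exact mul_ne_zero (by exact_mod_cast ha1) (pow_ne_zero _ (by exact_mod_cast hx0))
  rw [hNp, Finset.sum_sub_distrib, Finset.sum_add_distrib, Finset.sum_sub_distrib,
    ← legendreSym.sum_filter_eq_sum_mul_sq p hodd (by simp) g, legendreSym.at_one,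
    ← legendreSym.sum_filter_eq_sum_mul_sq p hodd ha0 g,
    ← legendreSym.sum_filter_eq_sum_mul_sq p hodd ha1 (fun z => (z : ℝ) / p),
    Finset.sum_const, Nat.card_Icc, Nat.add_sub_cancel, nsmul_one,
    Nat.cast_sub_one_div_two_of_odd hodd]
  ring
end

section
/- Let p ≡ 1 (mod 4) be a prime and let a be an integer with p ∤ a. Then the number of x with 1 ≤ x ≤ (p-1)/2 and {x^2}_p > {a·x^2}_p equals the number of x with 1 ≤ x ≤ (p-1)/2 and {x^2}_p < {a·x^2}_p. -/
/-!
Let `i` be a square root of `-1` mod `p`. Sending `x` to the representative of `± i x` in the half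
system `1, …, (p - 1) / 2` is an involution of the half system that negates `x²`, hence also
`a x²`, mod `p`. On nonzero residues negation reverses the order of least nonnegative
representatives, so this involution exchanges the two sets being counted.
-/

open Finset

namespace ZMod

variable {n : ℕ}

lemma natCast_ne_zero_of_mem_Icc_half {x : ℕ} (hx : x ∈ Icc 1 (n / 2)) : (x : ZMod n) ≠ 0 := by
  rw [mem_Icc] at hx
  rw [Ne, natCast_eq_zero_iff]
  intro h
  have := Nat.le_of_dvd (by omega) h
  omega

def rotateHalf (i : ZMod n) (x : ℕ) : ℕ := (i * x).valMinAbs.natAbs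

variable [NeZero n]

lemma natCast_natAbs_valMinAbs_eq_or_eq_neg (y : ZMod n) :
    (y.valMinAbs.natAbs : ZMod n) = y ∨ (y.valMinAbs.natAbs : ZMod n) = -y := by
  rw [natCast_natAbs_valMinAbs]
  split_ifs <;> simp

lemma val_neg_lt_val_neg_iff_s18 {y z : ZMod n} (hy : y ≠ 0) (hz : z ≠ 0) :
    (-y).val < (-z).val ↔ z.val < y.val := by
  rw [neg_val, neg_val, if_neg hy, if_neg hz]
  have := y.val_lt
  have := z.val_lt
  omega

variable {i : ZMod n}

lemma rotateHalf_mem_Icc (hi : i * i = -1) {x : ℕ} (hx : x ∈ Icc 1 (n / 2)) :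
    rotateHalf i x ∈ Icc 1 (n / 2) := by
  refine mem_Icc.mpr ⟨Nat.one_le_iff_ne_zero.mpr ?_, natAbs_valMinAbs_le _⟩
  rw [rotateHalf, Int.natAbs_ne_zero, Ne, valMinAbs_eq_zero]
  intro h
  apply natCast_ne_zero_of_mem_Icc_half hx
  linear_combination -i * h + (x : ZMod n) * hi

lemma natCast_rotateHalf_sq (hi : i * i = -1) (x : ℕ) :
    (rotateHalf i x : ZMod n) ^ 2 = -(x : ZMod n) ^ 2 := by
  rcases natCast_natAbs_valMinAbs_eq_or_eq_neg (i * (x : ZMod n)) with h | h <;>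
    rw [rotateHalf, h] <;> linear_combination (x : ZMod n) ^ 2 * hi

lemma rotateHalf_rotateHalf (hi : i * i = -1) {x : ℕ} (hx : x ≤ n / 2) :
    rotateHalf i (rotateHalf i x) = x := by
  have hix : i * (rotateHalf i x : ZMod n) = -x ∨ i * (rotateHalf i x : ZMod n) = x := by
    rcases natCast_natAbs_valMinAbs_eq_or_eq_neg (i * (x : ZMod n)) with h | h <;>
      rw [rotateHalf, h]
    · left; linear_combination (x : ZMod n) * hi
    · right; linear_combination -(x : ZMod n) * hi
  rw [rotateHalf]
  rcases hix with h | h <;>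
    simp only [h, natAbs_valMinAbs_neg, valMinAbs_natCast_of_le_half hx, Int.natAbs_natCast]

end ZMod

theorem Finset.card_filter_val_lt_comm_of_involution {α : Type*} {n : ℕ} [NeZero n]
    {s : Finset α} {g : α → α} (hg : ∀ x ∈ s, g x ∈ s) (hgg : ∀ x ∈ s, g (g x) = x)
    {u v : α → ZMod n} (hu0 : ∀ x ∈ s, u x ≠ 0) (hv0 : ∀ x ∈ s, v x ≠ 0)
    (hu : ∀ x ∈ s, u (g x) = -u x) (hv : ∀ x ∈ s, v (g x) = -v x) :
    #{x ∈ s | (v x).val < (u x).val} = #{x ∈ s | (u x).val < (v x).val} := by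
  have hswap : ∀ x ∈ s, (u (g x)).val < (v (g x)).val ↔ (v x).val < (u x).val := by
    intro x hx
    rw [hu x hx, hv x hx, ZMod.val_neg_lt_val_neg_iff_s18 (hu0 x hx) (hv0 x hx)]
  refine card_bij' (fun x _ => g x) (fun x _ => g x) (fun x hx => ?_) (fun x hx => ?_)
    (fun x hx => hgg x (mem_filter.mp hx).1) (fun x hx => hgg x (mem_filter.mp hx).1)
  · rw [mem_filter] at hx ⊢
    exact ⟨hg x hx.1, (hswap x hx.1).mpr hx.2⟩
  · rw [mem_filter] at hx ⊢
    refine ⟨hg x hx.1, ?_⟩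
    rw [← hswap (g x) (hg x hx.1), hgg x hx.1]
    exact hx.2

lemma Int.emod_lt_emod_iff_val_lt (n : ℕ) [NeZero n] (y z : ℤ) :
    y % n < z % n ↔ (y : ZMod n).val < (z : ZMod n).val := by
  rw [← ZMod.val_intCast, ← ZMod.val_intCast, Nat.cast_lt]

theorem stmt_18 (p : ℕ) (hp : p.Prime) (hp4 : p % 4 = 1) (a : ℤ)
    (ha : ¬ (p : ℤ) ∣ a) :
    ((Finset.Icc 1 ((p - 1) / 2)).filter
      (fun x : ℕ => ((x : ℤ) ^ 2) % p > (a * (x : ℤ) ^ 2) % p)).card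
    = ((Finset.Icc 1 ((p - 1) / 2)).filter
      (fun x : ℕ => ((x : ℤ) ^ 2) % p < (a * (x : ℤ) ^ 2) % p)).card := by
  have : Fact p.Prime := ⟨hp⟩
  obtain ⟨i, hi⟩ : IsSquare (-1 : ZMod p) := ZMod.exists_sq_eq_neg_one_iff.mpr (by omega)
  have hhalf : (p - 1) / 2 = p / 2 := by omega
  have ha0 : (a : ZMod p) ≠ 0 := by rwa [Ne, ZMod.intCast_zmod_eq_zero_iff_dvd]
  have hx0 : ∀ x ∈ Icc 1 (p / 2), (x : ZMod p) ^ 2 ≠ 0 := fun x hx =>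
    pow_ne_zero 2 (ZMod.natCast_ne_zero_of_mem_Icc_half hx)
  have hsq := ZMod.natCast_rotateHalf_sq hi.symm
  simp only [hhalf, gt_iff_lt, Int.emod_lt_emod_iff_val_lt, Int.cast_mul, Int.cast_pow,
    Int.cast_natCast]
  refine card_filter_val_lt_comm_of_involution (fun x hx => ZMod.rotateHalf_mem_Icc hi.symm hx)
    (fun x hx => ZMod.rotateHalf_rotateHalf hi.symm (mem_Icc.mp hx).2) hx0
    (fun x hx => mul_ne_zero ha0 (hx0 x hx)) (fun x _ => hsq x) (fun x _ => ?_)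
  rw [hsq, mul_neg]
end

section
/- Let n be a positive odd integer and let a be an integer with gcd(a(1-a), n) = 1. Then (-1)^{|{1 ≤ k ≤ (n-1)/2 : {ka}_n > k}|} = (2a(1-a)/n), where (·/n) is the Jacobi symbol. -/
/-!
Let `G(c)` count the `k ∈ [1, n/2]` for which the residue of `kc` mod `n` lies above `n/2`.
Since `ka + k(1-a) = k < n`, the floors `⌊ka/n⌋` and `⌊k(1-a)/n⌋` add up to `-1` when
`{ka}_n > k` and to `0` otherwise, so the count equals `-∑ (⌊ka/n⌋ + ⌊k(1-a)/n⌋)`.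
For `c` prime to `n`, `k ↦ |kc|` (absolute least residue) permutes `[1, n/2]`; this gives
`∑ ⌊kc/n⌋ + G(c) ≡ (c - 1) ∑ k (mod 2)` and `G(cd) ≡ G(c) + G(d) (mod 2)`. Hence the count is
`≡ G(2) + G(a) + G(1-a) ≡ G(2a(1-a))`, and Jenkins' extension of Gauss' lemma,
`(c/n) = (-1)^G(c)`, finishes the proof. The latter is proved for odd primes `c` from
Eisenstein's lemma and quadratic reciprocity, and extends to all `c` by multiplicativity.
-/

open Finset

theorem Int.ite_lt_emod_eq_neg_ediv_add_ediv {n u v k : ℤ} (hk : 0 ≤ k) (hkn : k < n)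
    (huv : u + v = k) (hv : ¬ n ∣ v) : (if k < u % n then 1 else 0 : ℤ) = -(u / n + v / n) := by
  have hn : 0 < n := by omega
  have hu₀ := Int.emod_nonneg u hn.ne'
  have hu₁ := Int.emod_lt_of_pos u hn
  have hv₀ : 0 < v % n :=
    (Int.emod_nonneg v hn.ne').lt_of_ne fun h => hv (Int.dvd_of_emod_eq_zero h.symm)
  have hv₁ := Int.emod_lt_of_pos v hn
  -- `0 < u % n + v % n < 2n` and `0 ≤ k < n` leave room only for the sums `0` and `-1`
  have hq : n * (u / n + v / n) = k - u % n - v % n := by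
    linarith [Int.mul_ediv_add_emod u n, Int.mul_ediv_add_emod v n]
  have hq₀ : -1 ≤ u / n + v / n := by nlinarith
  have hq₁ : u / n + v / n ≤ 0 := by nlinarith
  obtain hq' | hq' : u / n + v / n = -1 ∨ u / n + v / n = 0 := by omega
  · rw [hq'] at hq ⊢
    rw [if_pos (by linarith)]
    norm_num
  · rw [hq'] at hq ⊢
    rw [if_neg (by linarith)]
    norm_num

namespace ZMod

variable {n : ℕ}

def absLeastResidue (x : ZMod n) (k : ℕ) : ℕ := ((k : ZMod n) * x).valMinAbs.natAbs

def gaussCount (n : ℕ) (x : ZMod n) : ℕ :=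
  #{k ∈ Icc 1 (n / 2) | n / 2 < (((k : ℕ) : ZMod n) * x).val}

lemma neg_one_pow_eq_neg_one_pow_of_natCast_eq {a b : ℕ} (h : (a : ZMod 2) = b) :
    (-1 : ℤ) ^ a = (-1) ^ b := by
  rw [neg_one_pow_eq_pow_mod_two, (natCast_eq_natCast_iff' a b 2).1 h, ← neg_one_pow_eq_pow_mod_two]

lemma natCast_ne_zero_of_mem_Icc_s19 {k : ℕ} (hk : k ∈ Icc 1 (n / 2)) : (k : ZMod n) ≠ 0 := by
  rw [Ne, natCast_eq_zero_iff]
  rw [mem_Icc] at hk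
  exact fun h => absurd (Nat.le_of_dvd (by omega) h) (by omega)

lemma exists_odd_natCast_eq (hn : Odd n) (x : ZMod n) : ∃ m : ℕ, Odd m ∧ (m : ZMod n) = x := by
  have : NeZero n := ⟨hn.pos.ne'⟩
  by_cases hx : Odd x.val
  · exact ⟨x.val, hx, natCast_zmod_val x⟩
  · exact ⟨x.val + n, (Nat.not_odd_iff_even.1 hx).add_odd hn, by simp⟩

lemma isUnit_two_of_odd (hn : Odd n) : IsUnit (2 : ZMod n) := by
  exact_mod_cast (isUnit_iff_coprime 2 n).2 (Nat.coprime_two_left.2 hn)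

lemma absLeastResidue_one {k : ℕ} (hk : k ≤ n / 2) : absLeastResidue (1 : ZMod n) k = k := by
  rw [absLeastResidue, mul_one, valMinAbs_natCast_of_le_half hk, Int.natAbs_natCast]

section

variable [NeZero n] {x y : ZMod n} {k : ℕ}

lemma absLeastResidue_mem_Icc (hx : IsUnit x) (hk : k ∈ Icc 1 (n / 2)) :
    absLeastResidue x k ∈ Icc 1 (n / 2) := by
  have hne : ((k : ZMod n) * x).valMinAbs ≠ 0 := by
    rw [Ne, valMinAbs_eq_zero, hx.mul_left_eq_zero]
    exact natCast_ne_zero_of_mem_Icc_s19 hk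
  exact mem_Icc.2 ⟨Int.natAbs_pos.2 hne, natAbs_valMinAbs_le _⟩

lemma natCast_absLeastResidue (x : ZMod n) (k : ℕ) :
    (absLeastResidue x k : ZMod n) =
      if ((k : ZMod n) * x).val ≤ n / 2 then k * x else -(k * x) :=
  natCast_natAbs_valMinAbs _

lemma absLeastResidue_absLeastResidue (x y : ZMod n) (k : ℕ) :
    absLeastResidue y (absLeastResidue x k) = absLeastResidue (x * y) k := by
  rw [absLeastResidue, natCast_absLeastResidue]
  split_ifs
  · rw [mul_assoc, absLeastResidue]
  · rw [neg_mul, natAbs_valMinAbs_neg, mul_assoc, absLeastResidue]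

lemma sum_comp_absLeastResidue {M : Type*} [AddCommMonoid M] (hx : IsUnit x) (f : ℕ → M) :
    ∑ k ∈ Icc 1 (n / 2), f (absLeastResidue x k) = ∑ k ∈ Icc 1 (n / 2), f k := by
  refine sum_nbij' (absLeastResidue x) (absLeastResidue ↑hx.unit⁻¹)
    (fun k hk => absLeastResidue_mem_Icc hx hk)
    (fun k hk => absLeastResidue_mem_Icc hx.unit⁻¹.isUnit hk) (fun k hk => ?_) (fun k hk => ?_)
    fun _ _ => rfl
  · rw [absLeastResidue_absLeastResidue, hx.mul_val_inv, absLeastResidue_one (mem_Icc.1 hk).2]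
  · rw [absLeastResidue_absLeastResidue, hx.val_inv_mul, absLeastResidue_one (mem_Icc.1 hk).2]

lemma half_lt_val_neg_iff (hn : Odd n) {z : ZMod n} (hz : z ≠ 0) :
    n / 2 < (-z).val ↔ z.val ≤ n / 2 := by
  rw [neg_val, if_neg hz]
  have := z.val_lt
  obtain ⟨t, rfl⟩ := hn
  omega

theorem gaussCount_mul (hn : Odd n) (hx : IsUnit x) (hy : IsUnit y) :
    (gaussCount n (x * y) : ZMod 2) = gaussCount n x + gaussCount n y := by
  simp only [gaussCount, card_filter, Nat.cast_sum, Nat.cast_ite, Nat.cast_one, Nat.cast_zero]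
  rw [← sum_comp_absLeastResidue hx
    (fun j => if n / 2 < ((j : ZMod n) * y).val then (1 : ZMod 2) else 0), ← sum_add_distrib]
  refine sum_congr rfl fun k hk => ?_
  have hkxy : (k : ZMod n) * x * y ≠ 0 := by
    rw [mul_assoc, Ne, (hx.mul hy).mul_left_eq_zero]
    exact natCast_ne_zero_of_mem_Icc_s19 hk
  rw [natCast_absLeastResidue, ← mul_assoc]
  split_ifs <;> simp_all [half_lt_val_neg_iff hn hkxy] <;> first | omega | decide

lemma natCast_val_eq_natAbs_valMinAbs_add (hn : Odd n) (z : ZMod n) :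
    (z.val : ZMod 2) = z.valMinAbs.natAbs + if n / 2 < z.val then 1 else 0 := by
  rw [valMinAbs_natAbs_eq_min, ← Nat.cast_one, ← Nat.cast_zero, ← Nat.cast_ite, ← Nat.cast_add,
    natCast_eq_natCast_iff']
  have := z.val_lt
  obtain ⟨t, rfl⟩ := hn
  split_ifs <;> omega

theorem sum_ediv_add_gaussCount (hn : Odd n) {c : ℤ} (hc : IsUnit (c : ZMod n)) :
    ((∑ k ∈ Icc 1 (n / 2), k * c / n : ℤ) : ZMod 2) + gaussCount n c =
      (c - 1) * ∑ k ∈ Icc 1 (n / 2), (k : ZMod 2) := by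
  have hval (k : ℕ) : (k : ZMod 2) * c = (k * c / n : ℤ) + (((k : ZMod n) * c).val : ZMod 2) := by
    have hdiv := congrArg (Int.cast : ℤ → ZMod 2) (Int.mul_ediv_add_emod (k * c) n)
    rw [← val_intCast] at hdiv
    push_cast [hn.natCast_zmod_two] at hdiv
    rw [← hdiv, one_mul]
  have hsum : ∑ k ∈ Icc 1 (n / 2), (((k : ZMod n) * c).val : ZMod 2) =
      ∑ k ∈ Icc 1 (n / 2), (k : ZMod 2) + gaussCount n c := by
    simp only [natCast_val_eq_natAbs_valMinAbs_add hn, sum_add_distrib, gaussCount, card_filter,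
      Nat.cast_sum, Nat.cast_ite, Nat.cast_one, Nat.cast_zero]
    rw [← sum_comp_absLeastResidue hc (fun k : ℕ => (k : ZMod 2))]
    rfl
  have htotal := sum_congr rfl fun k (_ : k ∈ Icc 1 (n / 2)) => hval k
  rw [← sum_mul, sum_add_distrib, hsum] at htotal
  rw [Int.cast_sum]
  linear_combination -htotal

lemma gaussCount_one : gaussCount n 1 = 0 := by
  rw [gaussCount, card_eq_zero, filter_eq_empty_iff]
  intro k hk
  have hkn : k < n := by have := NeZero.pos n; rw [mem_Icc] at hk; omega
  rw [mul_one, val_natCast_of_lt hkn]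
  exact not_lt.2 (mem_Icc.1 hk).2

theorem jacobiSym_natCast_prime (hn : Odd n) {q : ℕ} (hq : q.Prime) (hq2 : q ≠ 2)
    (hqn : IsUnit (q : ZMod n)) : jacobiSym q n = (-1) ^ gaussCount n q := by
  have := Fact.mk hq
  have hqodd : Odd q := hq.odd_of_ne_two hq2
  have hnq : (n : ZMod q) ≠ 0 := by
    rw [Ne, natCast_eq_zero_iff, ← hq.coprime_iff_not_dvd]
    exact (isUnit_iff_coprime q n).1 hqn
  have hrec := sum_mul_div_add_sum_mul_div_eq_mul q n hnq
  simp only [Nat.succ_eq_add_one, Ico_add_one_right_eq_Icc] at hrec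
  have hpar := sum_ediv_add_gaussCount hn (c := q) (by exact_mod_cast hqn)
  have hS : ∑ k ∈ Icc 1 (n / 2), (k : ℤ) * q / n = (∑ k ∈ Icc 1 (n / 2), k * q / n : ℕ) := by
    push_cast
    rfl
  rw [hS] at hpar
  simp only [Int.cast_natCast, hqodd.natCast_zmod_two, sub_self, zero_mul] at hpar
  rw [← Nat.cast_add, natCast_eq_zero_iff_even] at hpar
  rw [jacobiSym.quadratic_reciprocity hqodd hn, ← jacobiSym.legendreSym.to_jacobiSym,
    eisenstein_lemma hq2 (Nat.odd_iff.1 hn) hnq, Nat.succ_eq_add_one, Ico_add_one_right_eq_Icc,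
    ← pow_add]
  refine neg_one_pow_congr ?_
  simp only [Nat.even_iff] at hpar ⊢
  omega

theorem jacobiSym_natCast_of_odd (hn : Odd n) {m : ℕ} (hm : Odd m) (hmn : IsUnit (m : ZMod n)) :
    jacobiSym m n = (-1) ^ gaussCount n m := by
  induction m using Nat.recOnMul with
  | zero => exact absurd hm Nat.not_odd_zero
  | one => rw [Nat.cast_one, jacobiSym.one_left, Nat.cast_one, gaussCount_one, pow_zero]
  | prime p hp =>
    exact jacobiSym_natCast_prime hn hp (by rintro rfl; exact absurd hm (by decide)) hmn
  | mul a b iha ihb =>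
    obtain ⟨ha, hb⟩ := Nat.odd_mul.1 hm
    rw [Nat.cast_mul, IsUnit.mul_iff] at hmn
    rw [Nat.cast_mul, jacobiSym.mul_left, iha ha hmn.1, ihb hb hmn.2, ← pow_add, Nat.cast_mul]
    exact neg_one_pow_eq_neg_one_pow_of_natCast_eq
      (by rw [Nat.cast_add, gaussCount_mul hn hmn.1 hmn.2])

theorem jacobiSym_eq_neg_one_pow_gaussCount (hn : Odd n) {c : ℤ} (hc : IsUnit (c : ZMod n)) :
    jacobiSym c n = (-1) ^ gaussCount n c := by
  -- an odd representative keeps the prime `2` out of the factorisation used in the induction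
  obtain ⟨m, hm, hmc⟩ := exists_odd_natCast_eq hn (c : ZMod n)
  have hcm : c % n = m % n := (intCast_eq_intCast_iff' c m n).1 (by rw [Int.cast_natCast, hmc])
  rw [jacobiSym.mod_left' hcm, ← hmc, jacobiSym_natCast_of_odd hn hm (hmc ▸ hc)]

theorem gaussCount_two (hn : Odd n) :
    (gaussCount n 2 : ZMod 2) = ∑ k ∈ Icc 1 (n / 2), (k : ZMod 2) := by
  have hfloor : ∑ k ∈ Icc 1 (n / 2), (k : ℤ) * 2 / n = 0 := by
    refine sum_eq_zero fun k hk => Int.ediv_eq_zero_of_lt (by positivity) ?_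
    have := Nat.odd_iff.1 hn
    rw [mem_Icc] at hk
    exact_mod_cast (by omega : k * 2 < n)
  have h2 : IsUnit ((2 : ℤ) : ZMod n) := by exact_mod_cast isUnit_two_of_odd hn
  simpa [hfloor, show (2 - 1 : ZMod 2) = 1 by decide] using sum_ediv_add_gaussCount hn h2

theorem card_filter_lt_emod_eq {a : ℤ} (ha : IsUnit (1 - a : ZMod n)) :
    (((Icc 1 (n / 2)).filter fun k : ℕ => (k : ℤ) * a % n > k).card : ℤ) =
      -∑ k ∈ Icc 1 (n / 2), ((k : ℤ) * a / n + k * (1 - a) / n) := by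
  rw [card_filter, Nat.cast_sum, ← sum_neg_distrib]
  refine sum_congr rfl fun k hk => ?_
  have hkn : (k : ℤ) < n := by have := NeZero.pos n; rw [mem_Icc] at hk; omega
  have hdvd : ¬ (n : ℤ) ∣ k * (1 - a) := by
    rw [← intCast_zmod_eq_zero_iff_dvd]
    push_cast
    rw [ha.mul_left_eq_zero]
    exact natCast_ne_zero_of_mem_Icc_s19 hk
  rw [Nat.cast_ite, Nat.cast_one, Nat.cast_zero]
  exact Int.ite_lt_emod_eq_neg_ediv_add_ediv (by positivity) hkn (by ring) hdvd

end

end ZMod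

theorem stmt_19_general (n : ℕ) (hn : Odd n) (a : ℤ)
    (ha : IsCoprime (a * (1 - a)) (n : ℤ)) :
    ((-1 : ℤ) ^ ((Finset.Icc 1 ((n - 1) / 2)).filter
        (fun k : ℕ => ((k : ℤ) * a) % n > (k : ℤ))).card
      = jacobiSym (2 * a * (1 - a)) n) := by
  have : NeZero n := ⟨hn.pos.ne'⟩
  obtain ⟨ha₀, ha₁⟩ : IsUnit (a : ZMod n) ∧ IsUnit (1 - a : ZMod n) := by
    simpa using (ZMod.coe_int_isUnit_iff_isCoprime _ n).2 ha.symm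
  have h2 := ZMod.isUnit_two_of_odd hn
  have hhalf : (n - 1) / 2 = n / 2 := by rcases hn with ⟨t, rfl⟩; omega
  rw [hhalf, ZMod.jacobiSym_eq_neg_one_pow_gaussCount hn (by push_cast; exact (h2.mul ha₀).mul ha₁)]
  refine ZMod.neg_one_pow_eq_neg_one_pow_of_natCast_eq ?_
  have hcount := congrArg (Int.cast : ℤ → ZMod 2) (ZMod.card_filter_lt_emod_eq ha₁)
  have hSa := ZMod.sum_ediv_add_gaussCount hn ha₀
  have hSb := ZMod.sum_ediv_add_gaussCount hn (c := 1 - a) (by exact_mod_cast ha₁)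
  push_cast [sum_add_distrib] at hcount hSa hSb ⊢
  rw [ZMod.gaussCount_mul hn (h2.mul ha₀) ha₁, ZMod.gaussCount_mul hn h2 ha₀,
    ZMod.gaussCount_two hn]
  linear_combination hcount - hSa - hSb

theorem stmt_19 (n : ℕ) (hn : Odd n) (hpos : 0 < n) (a : ℤ)
    (ha : IsCoprime (a * (1 - a)) (n : ℤ)) :
    ((-1 : ℤ) ^ ((Finset.Icc 1 ((n - 1) / 2)).filter
        (fun k : ℕ => ((k : ℤ) * a) % n > (k : ℤ))).card
      = jacobiSym (2 * a * (1 - a)) n) :=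
  stmt_19_general n hn a ha
end
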